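/- arXiv:2212.09287 — 4 statements merged into one kernel-verified Lean document; each statement's English description precedes it below -/
import Mathlib

section
/- Let φ ∈ C²(ℝ³). Then for all σ ∈ S² and all v, v* ∈ ℝ³, |Δφ| ≤ (1/2)·(sup_{|u| ≤ √(|v|²+|v*|²)} |∂²φ(u)|)·|v−v*|²·sinθ, where θ = arccos(⟨(v−v*)/|v−v*|, σ⟩) ∈ [0,π]. -/
open MeasureTheory Real Filter Set
open scoped InnerProductSpace ENNReal

noncomputable section

abbrev V3 := EuclideanSpace ℝ (Fin 3)
abbrev Sph := Metric.sphere (0 : V3) 1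

/-- The surface measure on the unit sphere `S²` of `ℝ³`. -/
def sphμ : Measure Sph := (volume : Measure V3).toSphere

/-- Measure on `ℝ³ × S²`. -/
def μVS : Measure (V3 × Sph) := (volume : Measure V3).prod sphμ

/-- Measure on `ℝ³ × ℝ³ × S²`. -/
def μVVS : Measure (V3 × V3 × Sph) := (volume : Measure V3).prod μVS

/-- `v' = (v+v*)/2 + (|v-v*|/2) σ`. -/
def vP (v w : V3) (σ : Sph) : V3 := (2:ℝ)⁻¹ • (v + w) + ((2:ℝ)⁻¹ * ‖v - w‖) • (σ : V3)

/-- `v*' = (v+v*)/2 - (|v-v*|/2) σ`. -/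
def wP (v w : V3) (σ : Sph) : V3 := (2:ℝ)⁻¹ • (v + w) - ((2:ℝ)⁻¹ * ‖v - w‖) • (σ : V3)

/-- `cos θ = ⟨v - v*, σ⟩ / |v - v*|`. -/
def cosΘ (v w : V3) (σ : Sph) : ℝ := ⟪v - w, (σ : V3)⟫_ℝ / ‖v - w‖

/-- `sin θ = √(1 - cos² θ)`. -/
def sinΘ (v w : V3) (σ : Sph) : ℝ := Real.sqrt (1 - cosΘ v w σ ^ 2)

/-- `⟨v⟩^s = (1+|v|²)^{s/2}`. -/
def wgt (s : ℝ) (v : V3) : ℝ := (1 + ‖v‖ ^ 2) ^ (s / 2)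

/-- `‖f‖_{L¹_s}`. -/
def L1sNorm (s : ℝ) (f : V3 → ℝ) : ℝ := ∫ v : V3, |f v| * wgt s v

/-- `f ∈ L¹_s(ℝ³)`. -/
def MemL1s (s : ℝ) (f : V3 → ℝ) : Prop := Integrable fun v : V3 => |f v| * wgt s v

/-- `Π_F(f) = f'f*'(1-f)(1-f*) - f f*(1-f')(1-f*')`. -/
def PiF (f : V3 → ℝ) (v w : V3) (σ : Sph) : ℝ :=
  f (vP v w σ) * f (wP v w σ) * (1 - f v) * (1 - f w)
    - f v * f w * (1 - f (vP v w σ)) * (1 - f (wP v w σ))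

/-- Gain part `Π_F^{(+)}(f)`. -/
def PiFp (f : V3 → ℝ) (v w : V3) (σ : Sph) : ℝ :=
  f (vP v w σ) * f (wP v w σ) * (1 - f v) * (1 - f w)

/-- Loss part `Π_F^{(-)}(f)`. -/
def PiFm (f : V3 → ℝ) (v w : V3) (σ : Sph) : ℝ :=
  f v * f w * (1 - f (vP v w σ)) * (1 - f (wP v w σ))

/-- `Δφ = φ(v') + φ(v*') - φ(v) - φ(v*)`. -/
def Δφ (φ : V3 → ℝ) (v w : V3) (σ : Sph) : ℝ := φ (vP v w σ) + φ (wP v w σ) - φ v - φ w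

/-- Assumption (A1). -/
structure A1cond (bl bu Φs : ℝ → ℝ) : Prop where
  meas_bl : Measurable bl
  meas_bu : Measurable bu
  meas_Φ : Measurable Φs
  bl_pos : ∀ t ∈ Set.Ioo (-1:ℝ) 1, 0 < bl t
  bl_le_bu : ∀ t ∈ Set.Ioo (-1:ℝ) 1, bl t ≤ bu t
  bl_even : ∀ t ∈ Set.Ioo (-1:ℝ) 1, bl (-t) = bl t
  bu_even : ∀ t ∈ Set.Ioo (-1:ℝ) 1, bu (-t) = bu t
  Φ_pos : ∀ r > (0:ℝ), 0 < Φs r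
  Φ_inf : ∀ r ≥ (1:ℝ), 1 ≤ Φs r
  Φ_sup : ∃ M : ℝ, ∀ r > (0:ℝ), Φs r ≤ M

/-- Assumption (A2). -/
structure A2cond (B : V3 → Sph → ℝ) (bl bu Φs : ℝ → ℝ) (γ : ℝ) : Prop where
  meas : Measurable (Function.uncurry B)
  γ_nonneg : 0 ≤ γ
  γ_le_one : γ ≤ 1
  lower : ∀ z : V3, z ≠ 0 → ∀ σ : Sph,
    ‖z‖ ^ γ * Φs ‖z‖ * bl (⟪z, (σ : V3)⟫_ℝ / ‖z‖) ≤ B z σ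
  upper : ∀ z : V3, z ≠ 0 → ∀ σ : Sph,
    B z σ ≤ (1 + ‖z‖ ^ γ) * bu (⟪z, (σ : V3)⟫_ℝ / ‖z‖)
  cutoff : IntervalIntegrable (fun θ => bu (Real.cos θ) * Real.sin θ) volume 0 π

/-- Assumption (A3). -/
structure A3cond (B : V3 → Sph → ℝ) (bl bu Φs : ℝ → ℝ) (γ : ℝ) : Prop where
  meas : Measurable (Function.uncurry B)
  γ_lb : -4 ≤ γ
  γ_neg : γ < 0
  lower : ∀ z : V3, z ≠ 0 → ∀ σ : Sph,
    ‖z‖ ^ γ * Φs ‖z‖ * bl (⟪z, (σ : V3)⟫_ℝ / ‖z‖) ≤ B z σ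
  upper : ∀ z : V3, z ≠ 0 → ∀ σ : Sph,
    B z σ ≤ ‖z‖ ^ γ * bu (⟪z, (σ : V3)⟫_ℝ / ‖z‖)
  cutoff : IntervalIntegrable (fun θ => bu (Real.cos θ) * Real.sin θ ^ 2) volume 0 π

/-- Assumption (A4): `b_*` is completely positive in `cos² θ`. -/
def A4cond (bl : ℝ → ℝ) : Prop :=
  ∃ a : ℕ → ℝ, (∀ n, 0 ≤ a n) ∧ ∀ t ∈ Set.Ioo (-1:ℝ) 1, HasSum (fun n => a n * t ^ (2 * n)) (bl t)

/-- The collision operator with kernel `B`. -/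
def Qop (B : V3 → Sph → ℝ) (g : V3 → ℝ) (v : V3) : ℝ :=
  ∫ p : V3 × Sph, B (v - p.1) p.2 * PiF g v p.1 p.2 ∂μVS

/-- Conservation of mass, momentum and kinetic energy. -/
def Conserves (f₀ : V3 → ℝ) (f : ℝ → V3 → ℝ) : Prop :=
  ∀ t ≥ (0:ℝ), (∫ v : V3, f t v) = (∫ v : V3, f₀ v)
    ∧ (∫ v : V3, f t v • v) = (∫ v : V3, f₀ v • v)
    ∧ (∫ v : V3, f t v * ‖v‖ ^ 2) = (∫ v : V3, f₀ v * ‖v‖ ^ 2)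

/-- Mild solution of Eq.(BFD) with initial datum `f₀`. -/
structure IsMildSol (B : V3 → Sph → ℝ) (f₀ : V3 → ℝ) (f : ℝ → V3 → ℝ) : Prop where
  meas : Measurable (Function.uncurry f)
  range01 : ∀ t ≥ (0:ℝ), ∀ v, f t v ∈ Set.Icc (0:ℝ) 1
  bdd2 : ∃ C : ℝ, ∀ t ≥ (0:ℝ), MemL1s 2 (f t) ∧ L1sNorm 2 (f t) ≤ C
  init : ∀ v, f 0 v = f₀ v
  sol : ∀ᵐ v : V3,
    (∀ T > (0:ℝ),
      Integrable (fun q : ℝ × V3 × Sph => B (v - q.2.1) q.2.2 * PiFp (f q.1) v q.2.1 q.2.2)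
        (((volume : Measure ℝ).restrict (Set.Ioc 0 T)).prod μVS) ∧
      Integrable (fun q : ℝ × V3 × Sph => B (v - q.2.1) q.2.2 * PiFm (f q.1) v q.2.1 q.2.2)
        (((volume : Measure ℝ).restrict (Set.Ioc 0 T)).prod μVS)) ∧
    ∀ t ≥ (0:ℝ), f t v = f₀ v + ∫ τ in (0:ℝ)..t, Qop B (f τ) v

/-- `F` is the equilibrium with the same mass, mean velocity and kinetic energy as `f₀`. -/
def IsEquilibrium (f₀ F : V3 → ℝ) : Prop :=
  ((∫ v : V3, F v) = ∫ v : V3, f₀ v)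
  ∧ ((∫ v : V3, F v • v) = ∫ v : V3, f₀ v • v)
  ∧ ((∫ v : V3, F v * ‖v‖ ^ 2) = ∫ v : V3, f₀ v * ‖v‖ ^ 2)
  ∧ ((∃ a > (0:ℝ), ∃ b > (0:ℝ), ∃ v₀ : V3, ∀ v,
        F v = a * Real.exp (-b * ‖v - v₀‖ ^ 2) / (1 + a * Real.exp (-b * ‖v - v₀‖ ^ 2)))
     ∨ (∃ R > (0:ℝ), ∃ v₀ : V3, ∀ v, F v = if ‖v - v₀‖ ≤ R then 1 else 0))


/-- The Frobenius norm `|∂²φ(u)|` of the Hessian of `φ` at `u`. -/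
def hessFrob (φ : V3 → ℝ) (u : V3) : ℝ :=
  Real.sqrt (∑ i : Fin 3, ∑ j : Fin 3,
    (iteratedFDeriv ℝ 2 φ u ![EuclideanSpace.single i (1:ℝ), EuclideanSpace.single j (1:ℝ)]) ^ 2)

lemma hess_bilin_le (φ : V3 → ℝ) (u x y : V3) :
    |fderiv ℝ (fderiv ℝ φ) u x y| ≤ hessFrob φ u * ‖x‖ * ‖y‖ := by
  set D := fderiv ℝ (fderiv ℝ φ) u with hD
  set e : Fin 3 → V3 := fun i => EuclideanSpace.single i (1:ℝ) with he
  set H : Fin 3 → Fin 3 → ℝ := fun i j => D (e i) (e j) with hH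
  have hhf : hessFrob φ u = Real.sqrt (∑ i, ∑ j, (H i j) ^ 2) := by
    simp [hessFrob, iteratedFDeriv_two_apply, hH, he, hD]
  have hrepr : ∀ z : V3, z = ∑ i, z i • e i := by
    intro z
    have := (EuclideanSpace.basisFun (Fin 3) ℝ).sum_repr z
    simp only [EuclideanSpace.basisFun_repr, EuclideanSpace.basisFun_apply] at this
    exact this.symm
  have hDxy : D x y = ∑ i, ∑ j, x i * y j * H i j := by
    conv_lhs => rw [hrepr x, hrepr y]
    have h1 : D (∑ i, x i • e i) = ∑ i, x i • D (e i) := by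
      rw [map_sum]; exact Finset.sum_congr rfl fun i _ => D.map_smul _ _
    rw [h1, ContinuousLinearMap.sum_apply]
    refine Finset.sum_congr rfl fun i _ => ?_
    rw [ContinuousLinearMap.smul_apply, map_sum, Finset.smul_sum]
    refine Finset.sum_congr rfl fun j _ => ?_
    rw [ContinuousLinearMap.map_smul]
    simp only [smul_eq_mul, hH]
    ring
  have hxsq : ∑ i, x i ^ 2 = ‖x‖ ^ 2 := by
    rw [← real_inner_self_eq_norm_sq, PiLp.inner_apply]
    simp [sq]
  have hysq : ∑ i, y i ^ 2 = ‖y‖ ^ 2 := by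
    rw [← real_inner_self_eq_norm_sq, PiLp.inner_apply]
    simp [sq]
  have key : (D x y) ^ 2 ≤ (∑ i, ∑ j, (H i j) ^ 2) * (‖x‖ ^ 2 * ‖y‖ ^ 2) := by
    rw [hDxy, ← hxsq, ← hysq]
    have cs := Finset.sum_mul_sq_le_sq_mul_sq Finset.univ
      (fun p : Fin 3 × Fin 3 => x p.1 * y p.2) (fun p : Fin 3 × Fin 3 => H p.1 p.2)
    calc (∑ i, ∑ j, x i * y j * H i j) ^ 2
        = (∑ p : Fin 3 × Fin 3, (x p.1 * y p.2) * H p.1 p.2) ^ 2 := by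
          rw [Fintype.sum_prod_type]
      _ ≤ (∑ p : Fin 3 × Fin 3, (x p.1 * y p.2) ^ 2) * (∑ p : Fin 3 × Fin 3, (H p.1 p.2) ^ 2) := cs
      _ = (∑ i, ∑ j, (H i j) ^ 2) * ((∑ i, x i ^ 2) * (∑ j, y j ^ 2)) := by
          have e1 : (∑ p : Fin 3 × Fin 3, (x p.1 * y p.2) ^ 2)
              = (∑ i, x i ^ 2) * (∑ j, y j ^ 2) := by
            rw [Finset.sum_mul_sum, Fintype.sum_prod_type]
            simp [mul_pow]
          have e2 : (∑ p : Fin 3 × Fin 3, (H p.1 p.2) ^ 2) = ∑ i, ∑ j, (H i j) ^ 2 := by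
            rw [Fintype.sum_prod_type]
          rw [e1, e2]
          ring
  have hnn : (0:ℝ) ≤ ∑ i, ∑ j, (H i j) ^ 2 := by positivity
  calc |D x y| = Real.sqrt ((D x y) ^ 2) := (Real.sqrt_sq_eq_abs _).symm
    _ ≤ Real.sqrt ((∑ i, ∑ j, (H i j) ^ 2) * (‖x‖ ^ 2 * ‖y‖ ^ 2)) := Real.sqrt_le_sqrt key
    _ = hessFrob φ u * ‖x‖ * ‖y‖ := by
        rw [hhf, Real.sqrt_mul hnn, Real.sqrt_mul (by positivity), Real.sqrt_sq (norm_nonneg x),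
          Real.sqrt_sq (norm_nonneg y), mul_assoc]

lemma hessFrob_nonneg (φ : V3 → ℝ) (u : V3) : 0 ≤ hessFrob φ u := Real.sqrt_nonneg _

lemma hess_opNorm_le (φ : V3 → ℝ) (u : V3) : ‖fderiv ℝ (fderiv ℝ φ) u‖ ≤ hessFrob φ u := by
  refine ContinuousLinearMap.opNorm_le_bound _ (hessFrob_nonneg φ u) fun x => ?_
  refine ContinuousLinearMap.opNorm_le_bound _ (mul_nonneg (hessFrob_nonneg φ u) (norm_nonneg x)) fun y => ?_
  calc ‖fderiv ℝ (fderiv ℝ φ) u x y‖ = |fderiv ℝ (fderiv ℝ φ) u x y| := Real.norm_eq_abs _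
    _ ≤ hessFrob φ u * ‖x‖ * ‖y‖ := hess_bilin_le φ u x y

lemma hessFrob_le_opNorm (φ : V3 → ℝ) (u : V3) :
    hessFrob φ u ≤ 3 * ‖iteratedFDeriv ℝ 2 φ u‖ := by
  set T := iteratedFDeriv ℝ 2 φ u with hT
  have hterm : ∀ i j : Fin 3,
      (T ![EuclideanSpace.single i (1:ℝ), EuclideanSpace.single j (1:ℝ)]) ^ 2 ≤ ‖T‖ ^ 2 := by
    intro i j
    have h := T.le_opNorm ![EuclideanSpace.single i (1:ℝ), EuclideanSpace.single j (1:ℝ)]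
    have hp : (∏ k, ‖(![EuclideanSpace.single i (1:ℝ), EuclideanSpace.single j (1:ℝ)]) k‖) = 1 := by
      simp [Fin.prod_univ_two, EuclideanSpace.norm_single]
    rw [hp, mul_one] at h
    rw [← sq_abs]
    exact pow_le_pow_left₀ (abs_nonneg _) (by rwa [Real.norm_eq_abs] at h) 2
  have hsum : (∑ i : Fin 3, ∑ j : Fin 3,
      (T ![EuclideanSpace.single i (1:ℝ), EuclideanSpace.single j (1:ℝ)]) ^ 2) ≤ 9 * ‖T‖ ^ 2 := by
    calc (∑ i : Fin 3, ∑ j : Fin 3, _) ≤ ∑ _i : Fin 3, ∑ _j : Fin 3, ‖T‖ ^ 2 :=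
          Finset.sum_le_sum fun i _ => Finset.sum_le_sum fun j _ => hterm i j
      _ = 9 * ‖T‖ ^ 2 := by simp [Finset.sum_const]; ring
  calc hessFrob φ u ≤ Real.sqrt (9 * ‖T‖ ^ 2) := Real.sqrt_le_sqrt hsum
    _ = 3 * ‖T‖ := by
        rw [show (9:ℝ) * ‖T‖ ^ 2 = (3 * ‖T‖) ^ 2 by ring, Real.sqrt_sq (by positivity)]


set_option maxHeartbeats 1600000 in
/-- **Lemma 2.2 (1).** For `φ ∈ C²(ℝ³)`,
`|Δφ| ≤ (1/2) (sup_{|u| ≤ √(|v|²+|v*|²)} |∂²φ(u)|) |v-v*|² sin θ`. -/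
theorem deltaphi_hessian_bound (φ : V3 → ℝ) (hφ : ContDiff ℝ 2 φ) (σ : Sph) (v w : V3) :
    |Δφ φ v w σ|
      ≤ (1/2) * (⨆ u : {u : V3 // ‖u‖ ≤ Real.sqrt (‖v‖ ^ 2 + ‖w‖ ^ 2)}, hessFrob φ u)
          * ‖v - w‖ ^ 2 * sinΘ v w σ := by
  set R := Real.sqrt (‖v‖ ^ 2 + ‖w‖ ^ 2) with hR
  set M := ⨆ u : {u : V3 // ‖u‖ ≤ R}, hessFrob φ u with hM
  have hMnn : 0 ≤ M := Real.iSup_nonneg fun u => hessFrob_nonneg φ u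
  have hsin : 0 ≤ sinΘ v w σ := Real.sqrt_nonneg _
  by_cases hvw : v = w
  · subst hvw
    have h1 : vP v v σ = v := by
      rw [vP, sub_self, norm_zero, mul_zero, zero_smul, add_zero]; module
    have h2 : wP v v σ = v := by
      rw [wP, sub_self, norm_zero, mul_zero, zero_smul, sub_zero]; module
    have h3 : Δφ φ v v σ = 0 := by rw [Δφ, h1, h2]; ring
    rw [h3, sub_self, norm_zero, abs_zero]
    ring_nf
    positivity
  have hz : v - w ≠ 0 := sub_ne_zero.mpr hvw
  set n : ℝ := ‖v - w‖ with hn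
  have hnpos : 0 < n := norm_pos_iff.mpr hz
  set c := cosΘ v w σ with hc
  have hzσ : ⟪v - w, (σ:V3)⟫_ℝ = c * n := by
    rw [hc, cosΘ, ← hn]; field_simp
  have hσ : ‖(σ:V3)‖ = 1 := by
    have := σ.2
    rwa [mem_sphere_zero_iff_norm] at this
  set a := vP v w σ - v with had
  set b := vP v w σ - w with hbd
  have ha : a = ((2:ℝ)⁻¹ * n) • (σ:V3) - (2:ℝ)⁻¹ • (v - w) := by
    rw [had, vP, ← hn]; module
  have hb : b = ((2:ℝ)⁻¹ * n) • (σ:V3) + (2:ℝ)⁻¹ • (v - w) := by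
    rw [hbd, vP, ← hn]; module
  have e1 : ‖((2:ℝ)⁻¹ * n) • (σ:V3)‖ ^ 2 = ((2:ℝ)⁻¹ * n) ^ 2 := by
    rw [norm_smul, hσ, mul_one, Real.norm_eq_abs, sq_abs]
  have e2 : ‖((2:ℝ)⁻¹) • (v - w)‖ ^ 2 = ((2:ℝ)⁻¹) ^ 2 * n ^ 2 := by
    rw [norm_smul, mul_pow, Real.norm_eq_abs, sq_abs, ← hn]
  have e3 : ⟪((2:ℝ)⁻¹ * n) • (σ:V3), ((2:ℝ)⁻¹) • (v - w)⟫_ℝ = ((2:ℝ)⁻¹ * n) * ((2:ℝ)⁻¹ * (c * n)) := by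
    rw [real_inner_smul_left, real_inner_smul_right, real_inner_comm, hzσ]
  have ha2 : ‖a‖ ^ 2 = n ^ 2 / 2 * (1 - c) := by
    rw [ha, norm_sub_sq_real, e1, e2, e3]; ring
  have hb2 : ‖b‖ ^ 2 = n ^ 2 / 2 * (1 + c) := by
    rw [hb, norm_add_sq_real, e1, e2, e3]; ring
  have hab : ‖a‖ * ‖b‖ = (2:ℝ)⁻¹ * n ^ 2 * sinΘ v w σ := by
    have h1 : ‖a‖ * ‖b‖ = Real.sqrt (‖a‖ ^ 2 * ‖b‖ ^ 2) := by
      rw [Real.sqrt_mul (sq_nonneg _), Real.sqrt_sq (norm_nonneg _),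
        Real.sqrt_sq (norm_nonneg _)]
    rw [h1, ha2, hb2,
      show n ^ 2 / 2 * (1 - c) * (n ^ 2 / 2 * (1 + c)) = (n ^ 2 / 2) ^ 2 * (1 - c ^ 2) by ring,
      Real.sqrt_mul (sq_nonneg _), Real.sqrt_sq (by positivity), sinΘ, ← hc]
    ring
  -- membership of the four collision points in the ball of radius R
  have hsum : ‖vP v w σ‖ ^ 2 + ‖wP v w σ‖ ^ 2 = ‖v‖ ^ 2 + ‖w‖ ^ 2 := by
    have f1 : ‖((2:ℝ)⁻¹) • (v + w)‖ ^ 2 = ((2:ℝ)⁻¹) ^ 2 * ‖v + w‖ ^ 2 := by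
      rw [norm_smul, mul_pow, Real.norm_eq_abs, sq_abs]
    have f2 : ‖((2:ℝ)⁻¹ * ‖v - w‖) • (σ:V3)‖ ^ 2 = ((2:ℝ)⁻¹) ^ 2 * ‖v - w‖ ^ 2 := by
      rw [norm_smul, hσ, mul_one, Real.norm_eq_abs, sq_abs, mul_pow]
    have f3 : ‖v + w‖ ^ 2 = ‖v‖ ^ 2 + 2 * ⟪v, w⟫_ℝ + ‖w‖ ^ 2 := norm_add_sq_real v w
    have f4 : ‖v - w‖ ^ 2 = ‖v‖ ^ 2 - 2 * ⟪v, w⟫_ℝ + ‖w‖ ^ 2 := norm_sub_sq_real v w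
    rw [vP, wP, norm_add_sq_real, norm_sub_sq_real, f1, f2]
    linarith [f3, f4]
  have hmem : ∀ x : V3, ‖x‖ ^ 2 ≤ ‖v‖ ^ 2 + ‖w‖ ^ 2 → x ∈ Metric.closedBall (0:V3) R := by
    intro x hx
    rw [mem_closedBall_zero_iff, hR, ← Real.sqrt_sq (norm_nonneg x)]
    exact Real.sqrt_le_sqrt hx
  have hvmem : v ∈ Metric.closedBall (0:V3) R := hmem v (by nlinarith [sq_nonneg ‖w‖])
  have hwmem : w ∈ Metric.closedBall (0:V3) R := hmem w (by nlinarith [sq_nonneg ‖v‖])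
  have hvPmem : vP v w σ ∈ Metric.closedBall (0:V3) R :=
    hmem _ (by nlinarith [sq_nonneg ‖wP v w σ‖])
  have hwPmem : wP v w σ ∈ Metric.closedBall (0:V3) R :=
    hmem _ (by nlinarith [sq_nonneg ‖vP v w σ‖])
  -- differentiability
  have hφd : Differentiable ℝ φ := hφ.differentiable (by norm_num)
  have hf'd : Differentiable ℝ (fderiv ℝ φ) :=
    (hφ.fderiv_right (m := 1) (by norm_num)).differentiable one_ne_zero
  -- the sup bounds the Hessian on the ball
  have hMb : ∀ u : V3, u ∈ Metric.closedBall (0:V3) R → ‖fderiv ℝ (fderiv ℝ φ) u‖ ≤ M := by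
    obtain ⟨K, hK⟩ := (isCompact_closedBall (0:V3) R).exists_bound_of_continuousOn
      ((hφ.continuous_iteratedFDeriv (m := 2) (by norm_num)).continuousOn)
    have hbdd : BddAbove (Set.range fun u : {u : V3 // ‖u‖ ≤ R} => hessFrob φ u) := by
      refine ⟨3 * max K 0, ?_⟩
      rintro _ ⟨u, rfl⟩
      refine (hessFrob_le_opNorm φ u).trans ?_
      have h1 := hK u (mem_closedBall_zero_iff.mpr u.2)
      have h2 : ‖iteratedFDeriv ℝ 2 φ (u:V3)‖ ≤ max K 0 := le_trans h1 (le_max_left _ _)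
      linarith
    intro u hu
    exact (hess_opNorm_le φ u).trans (le_ciSup hbdd ⟨u, mem_closedBall_zero_iff.mp hu⟩)
  -- Step B : Lipschitz bound for the gradient difference
  have stepB : ∀ x : V3, x ∈ Metric.closedBall (0:V3) R → x - b ∈ Metric.closedBall (0:V3) R →
      ‖fderiv ℝ φ x - fderiv ℝ φ (x - b)‖ ≤ M * ‖b‖ := by
    intro x hx hxb
    have h := Convex.norm_image_sub_le_of_norm_hasFDerivWithin_le
      (f := fderiv ℝ φ) (f' := fun u => fderiv ℝ (fderiv ℝ φ) u)
      (fun u _ => (hf'd u).hasFDerivAt.hasFDerivWithinAt) (fun u hu => hMb u hu)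
      (convex_closedBall _ _) hxb hx
    rwa [sub_sub_cancel] at h
  -- Step A
  set F : V3 → ℝ := fun x => φ x - φ (x - b) with hF
  have hFd : ∀ x : V3, HasFDerivAt F (fderiv ℝ φ x - fderiv ℝ φ (x - b)) x := by
    intro x
    have h1 : HasFDerivAt φ (fderiv ℝ φ x) x := (hφd x).hasFDerivAt
    have h3 : HasFDerivAt (fun y : V3 => y - b) (ContinuousLinearMap.id ℝ V3) x :=
      (hasFDerivAt_id x).sub_const b
    have h2 : HasFDerivAt (fun y : V3 => φ (y - b)) (fderiv ℝ φ (x - b)) x := by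
      have h4 := ((hφd (x - b)).hasFDerivAt).comp x h3
      rw [ContinuousLinearMap.comp_id] at h4
      exact h4
    exact h1.sub h2
  have hvb : v - b = wP v w σ := by rw [hbd, vP, wP]; module
  have hvPb : vP v w σ - b = w := by rw [hbd, sub_sub_cancel]
  have hseg : ∀ x ∈ segment ℝ v (vP v w σ),
      x ∈ Metric.closedBall (0:V3) R ∧ x - b ∈ Metric.closedBall (0:V3) R := by
    intro x hx
    refine ⟨(convex_closedBall _ _).segment_subset hvmem hvPmem hx, ?_⟩
    obtain ⟨p, q, hp, hq, hpq, rfl⟩ := hx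
    have hb1 : b = p • b + q • b := by rw [← add_smul, hpq, one_smul]
    have hkey : p • v + q • vP v w σ - b = p • wP v w σ + q • w := by
      calc p • v + q • vP v w σ - b = p • v + q • vP v w σ - (p • b + q • b) := by rw [← hb1]
        _ = p • (v - b) + q • (vP v w σ - b) := by module
        _ = p • wP v w σ + q • w := by rw [hvb, hvPb]
    rw [hkey]
    exact (convex_closedBall _ _) hwPmem hwmem hp hq hpq
  have main := Convex.norm_image_sub_le_of_norm_hasFDerivWithin_le
    (f := F) (f' := fun x => fderiv ℝ φ x - fderiv ℝ φ (x - b))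
    (fun x _ => (hFd x).hasFDerivWithinAt)
    (fun x hx => stepB x (hseg x hx).1 (hseg x hx).2)
    (convex_segment v (vP v w σ)) (left_mem_segment ℝ v (vP v w σ))
    (right_mem_segment ℝ v (vP v w σ))
  have hΔ : Δφ φ v w σ = F (vP v w σ) - F v := by
    simp only [hF, Δφ, hvb, hvPb]; ring
  calc |Δφ φ v w σ| = ‖F (vP v w σ) - F v‖ := by rw [hΔ, Real.norm_eq_abs]
    _ ≤ M * ‖b‖ * ‖vP v w σ - v‖ := main
    _ = M * (‖a‖ * ‖b‖) := by rw [← had]; ring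
    _ = M * ((2:ℝ)⁻¹ * n ^ 2 * sinΘ v w σ) := by rw [hab]
    _ = 1/2 * M * n ^ 2 * sinΘ v w σ := by ring

end
end

section
/- Let B₀(z,σ) = B₀(|z|, cosθ) with cosθ = ⟨z,σ⟩/|z|, and suppose B₀ is completely positive in cos²θ, i.e., there are Borel functions a_n ≥ 0 on (0,∞) such that B₀(|z|, cosθ) = Σ_{n=0}^∞ a_n(|z|) cos^{2n}θ for all z ∈ ℝ³∖{0} and θ ∈ (0,π). Then for any Borel function h : ℝ³ → ℝ satisfying ∫_{ℝ³×ℝ³×S²} B₀(v−v*,σ)|h(v)h(v*)h(v')h(v*')| dσ dv dv* < ∞, it holds that ∫_{ℝ³×ℝ³×S²} B₀(v−v*,σ) h(v)h(v*)h(v')h(v*') dσ dv dv* ≥ 0. -/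
open MeasureTheory Real Filter Set
open scoped InnerProductSpace ENNReal

noncomputable section

open Topology in
/-- auxiliary marker to allow `open Topology` -/
theorem auxTopologyOpen : True := trivial

section AuxCP

instance : IsFiniteMeasure sphμ := by unfold sphμ; infer_instance

/-- Weighted radial measure `r^2 dr` on `(0,∞)`. -/
def ν2cp : Measure (Ioi (0:ℝ)) := Measure.volumeIoiPow 2

instance : SigmaFinite ν2cp := by unfold ν2cp; infer_instance

abbrev IoiPcp := ↥(Set.Ioi (0:ℝ))

/-- The product measure used for the polar/center-of-mass coordinates. -/
def ρcp : Measure ((V3 × IoiPcp) × (Sph × Sph)) :=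
  ((volume : Measure V3).prod ν2cp).prod (sphμ.prod sphμ)

lemma ρcp_def : ρcp = ((volume : Measure V3).prod ν2cp).prod (sphμ.prod sphμ) := rfl

lemma polarMPcp : MeasurePreserving (homeomorphUnitSphereProd V3)
    ((volume : Measure V3).comap (↑)) (sphμ.prod ν2cp) := by
  have := Measure.measurePreserving_homeomorphUnitSphereProd (volume : Measure V3)
  simpa [sphμ, ν2cp, finrank_euclideanSpace_fin] using this

lemma sphμ_singleton_cp (σ₀ : Sph) : sphμ {σ₀} = 0 := by
  have hmp := polarMPcp
  have hms : MeasurableSet ({σ₀} ×ˢ (univ : Set (Ioi (0:ℝ)))) :=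
    (measurableSet_singleton _).prod MeasurableSet.univ
  have h1 : (sphμ.prod ν2cp) ({σ₀} ×ˢ univ)
      = ((volume : Measure V3).comap (↑)) (homeomorphUnitSphereProd V3 ⁻¹' ({σ₀} ×ˢ univ)) := by
    rw [← hmp.map_eq, Measure.map_apply hmp.measurable hms]
  have hemb : MeasurableEmbedding ((↑) : ({0}ᶜ : Set V3) → V3) :=
    MeasurableEmbedding.subtype_coe (measurableSet_singleton (0:V3)).compl
  have h2 : ((volume : Measure V3).comap (↑))
      (homeomorphUnitSphereProd V3 ⁻¹' ({σ₀} ×ˢ univ)) = 0 := by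
    rw [hemb.comap_apply]
    refine measure_mono_null ?_ (Measure.addHaar_submodule volume (Submodule.span ℝ {(σ₀:V3)}) ?_)
    · rintro x ⟨y, hy, rfl⟩
      simp only [mem_preimage, mem_prod, mem_singleton_iff, mem_univ, and_true] at hy
      have : (y : V3) = ‖(y:V3)‖ • (σ₀ : V3) := by
        have h3 : ‖(y:V3)‖⁻¹ • (y:V3) = (σ₀:V3) := by simpa using congrArg Subtype.val hy
        have hn : ‖(y:V3)‖ ≠ 0 := norm_ne_zero_iff.2 y.2
        rw [← h3, smul_smul, mul_inv_cancel₀ hn, one_smul]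
      rw [this]
      exact Submodule.smul_mem _ _ (Submodule.mem_span_singleton_self _)
    · intro htop
      have hne : (σ₀:V3) ≠ 0 := ne_zero_of_mem_sphere one_ne_zero σ₀
      have h1 : Module.finrank ℝ (Submodule.span ℝ {(σ₀:V3)}) = 1 := finrank_span_singleton hne
      rw [htop, finrank_top, finrank_euclideanSpace_fin] at h1
      norm_num at h1
  rw [Measure.prod_prod] at h1
  have hν : ν2cp (univ : Set (Ioi (0:ℝ))) ≠ 0 := by
    intro h0
    have : ν2cp (Iio ⟨1, by norm_num⟩) = 0 :=
      le_antisymm (h0 ▸ measure_mono (subset_univ _)) zero_le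
    rw [ν2cp, Measure.volumeIoiPow_apply_Iio] at this
    simp at this
    norm_num at this
  have := h1.trans h2
  exact (mul_eq_zero.mp this).resolve_right hν

lemma coord_abs_le_cp (σ : Sph) (i : Fin 3) : |(σ : V3) i| ≤ 1 := by
  have h := abs_real_inner_le_norm ((σ:V3)) (EuclideanSpace.single i (1:ℝ))
  simp [EuclideanSpace.inner_single_right, mem_sphere_zero_iff_norm.1 σ.2] at h
  simpa using h

lemma SSb_cp (n : ℕ) (φ : Sph → ℝ) (hφ : Measurable φ) (C : ℝ) (hC : ∀ σ, |φ σ| ≤ C) :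
    0 ≤ ∫ q : Sph × Sph, ⟪(q.1:V3), (q.2:V3)⟫_ℝ ^ (2*n) * (φ q.1 * φ q.2) ∂(sphμ.prod sphμ) := by
  have hC0 : 0 ≤ C := le_trans (abs_nonneg _) (hC ⟨EuclideanSpace.single 0 1, by
    simp [EuclideanSpace.norm_single]⟩)
  set m : (Fin 3 → ℕ) → Sph → ℝ := fun k σ => ∏ i, (σ:V3) i ^ k i with hm
  have hmmeas : ∀ k, Measurable (m k) := by
    intro k
    apply Finset.measurable_prod
    intro i _
    fun_prop
  have hmb : ∀ k σ, |m k σ| ≤ 1 := by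
    intro k σ
    rw [hm, Finset.abs_prod]
    apply Finset.prod_le_one
    · intro i _; positivity
    · intro i _
      rw [abs_pow]
      exact pow_le_one₀ (abs_nonneg _) (coord_abs_le_cp σ i)
  have hfint : ∀ k, Integrable (fun σ => m k σ * φ σ) sphμ := by
    intro k
    refine (integrable_const C).mono' ((hmmeas k).mul hφ).aestronglyMeasurable ?_
    refine Eventually.of_forall fun σ => ?_
    rw [Real.norm_eq_abs, abs_mul]
    calc |m k σ| * |φ σ| ≤ 1 * C := mul_le_mul (hmb k σ) (hC σ) (abs_nonneg _) zero_le_one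
    _ = C := one_mul C
  have hexp : ∀ q : Sph × Sph, ⟪(q.1:V3), (q.2:V3)⟫_ℝ ^ (2*n) * (φ q.1 * φ q.2)
      = ∑ k ∈ Finset.piAntidiag Finset.univ (2*n),
          (Nat.multinomial Finset.univ k : ℝ) * ((m k q.1 * φ q.1) * (m k q.2 * φ q.2)) := by
    rintro ⟨ω, σ⟩
    have hin : ⟪(ω:V3), (σ:V3)⟫_ℝ = ∑ i : Fin 3, (ω:V3) i * (σ:V3) i := by
      simp [PiLp.inner_apply, RCLike.inner_apply, mul_comm]
    rw [hin, Finset.sum_pow_eq_sum_piAntidiag, Finset.sum_mul]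
    apply Finset.sum_congr rfl
    intro k _
    have : ∏ i, ((ω:V3) i * (σ:V3) i) ^ k i = m k ω * m k σ := by
      rw [hm]; simp only [mul_pow, Finset.prod_mul_distrib]
    rw [this]; ring
  calc (0:ℝ) ≤ ∑ k ∈ Finset.piAntidiag Finset.univ (2*n),
      (Nat.multinomial Finset.univ k : ℝ) *
        ((∫ σ, m k σ * φ σ ∂sphμ) * (∫ σ, m k σ * φ σ ∂sphμ)) := by
        apply Finset.sum_nonneg
        intro k _
        exact mul_nonneg (Nat.cast_nonneg _) (mul_self_nonneg _)
    _ = ∫ q : Sph × Sph, ⟪(q.1:V3), (q.2:V3)⟫_ℝ ^ (2*n) * (φ q.1 * φ q.2) ∂(sphμ.prod sphμ) := by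
        simp_rw [hexp]
        rw [integral_finset_sum]
        · apply Finset.sum_congr rfl
          intro k _
          rw [MeasureTheory.integral_const_mul,
            integral_prod_mul (fun σ => m k σ * φ σ) (fun σ => m k σ * φ σ)]
        · intro k _
          exact (((hfint k).mul_prod (hfint k))).const_mul _

open Topology in
lemma SS_cp (n : ℕ) (ψ : Sph → ℝ) (hψ : Measurable ψ)
    (hI : Integrable (fun q : Sph × Sph => ⟪(q.1:V3), (q.2:V3)⟫_ℝ ^ (2*n) * (ψ q.1 * ψ q.2))
      (sphμ.prod sphμ)) :
    0 ≤ ∫ q : Sph × Sph, ⟪(q.1:V3), (q.2:V3)⟫_ℝ ^ (2*n) * (ψ q.1 * ψ q.2)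
      ∂(sphμ.prod sphμ) := by
  set φ : ℕ → Sph → ℝ := fun N σ => if |ψ σ| ≤ (N:ℝ) then ψ σ else 0 with hφdef
  have hφmeas : ∀ N, Measurable (φ N) := fun N =>
    Measurable.ite (measurableSet_le hψ.abs measurable_const) hψ measurable_const
  have hφle : ∀ N σ, |φ N σ| ≤ |ψ σ| := by
    intro N σ; rw [hφdef]
    by_cases h : |ψ σ| ≤ (N:ℝ) <;> simp [h, abs_nonneg]
  have hφbd : ∀ N σ, |φ N σ| ≤ (N:ℝ) := by
    intro N σ; rw [hφdef]
    by_cases h : |ψ σ| ≤ (N:ℝ)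
    · simp [h]
    · simp only [h, if_false, abs_zero]
      exact Nat.cast_nonneg N
  set F : ℕ → Sph × Sph → ℝ :=
    fun N q => ⟪(q.1:V3), (q.2:V3)⟫_ℝ ^ (2*n) * (φ N q.1 * φ N q.2) with hF
  have hinner_meas : Measurable fun q : Sph × Sph => ⟪(q.1:V3), (q.2:V3)⟫_ℝ := by
    apply Measurable.inner
    · exact measurable_subtype_coe.comp measurable_fst
    · exact measurable_subtype_coe.comp measurable_snd
  have htend : Tendsto (fun N => ∫ q, F N q ∂(sphμ.prod sphμ)) atTop
      (𝓝 (∫ q : Sph × Sph, ⟪(q.1:V3), (q.2:V3)⟫_ℝ ^ (2*n) * (ψ q.1 * ψ q.2)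
        ∂(sphμ.prod sphμ))) := by
    apply tendsto_integral_of_dominated_convergence
      (bound := fun q => |⟪(q.1:V3), (q.2:V3)⟫_ℝ ^ (2*n) * (ψ q.1 * ψ q.2)|)
    · intro N
      exact ((hinner_meas.pow_const _).mul
        (((hφmeas N).comp measurable_fst).mul
          ((hφmeas N).comp measurable_snd))).aestronglyMeasurable
    · exact hI.abs
    · intro N
      refine Eventually.of_forall fun q => ?_
      rw [Real.norm_eq_abs, abs_mul, abs_mul, abs_mul, abs_mul]
      have := mul_le_mul (hφle N q.1) (hφle N q.2) (abs_nonneg _) (abs_nonneg _)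
      exact mul_le_mul_of_nonneg_left this (abs_nonneg _)
    · refine Eventually.of_forall fun q => ?_
      have : ∀ N ≥ ⌈|ψ q.1| ⊔ |ψ q.2|⌉₊, F N q
          = ⟪(q.1:V3), (q.2:V3)⟫_ℝ ^ (2*n) * (ψ q.1 * ψ q.2) := by
        intro N hN
        have h1 : |ψ q.1| ≤ (N:ℝ) :=
          le_trans (le_trans le_sup_left (Nat.le_ceil _)) (by exact_mod_cast hN)
        have h2 : |ψ q.2| ≤ (N:ℝ) :=
          le_trans (le_trans le_sup_right (Nat.le_ceil _)) (by exact_mod_cast hN)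
        rw [hF]; simp only [hφdef, if_pos h1, if_pos h2]
      exact tendsto_atTop_of_eventually_const this
  refine ge_of_tendsto' htend fun N => ?_
  exact SSb_cp n (φ N) (hφmeas N) N (hφbd N)

/-- Coordinate rearrangement equivalence. -/
def EquadCP : (V3 × IoiPcp) × (Sph × Sph) ≃ᵐ V3 × ((Sph × IoiPcp) × Sph) :=
  MeasurableEquiv.prodAssoc.trans ((MeasurableEquiv.refl V3).prodCongr
    (MeasurableEquiv.prodAssoc.symm.trans
      ((MeasurableEquiv.prodComm : IoiPcp × Sph ≃ᵐ Sph × IoiPcp).prodCongr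
        (MeasurableEquiv.refl Sph))))

def stepbCP : V3 × ((Sph × IoiPcp) × Sph) → V3 × (({0}ᶜ : Set V3) × Sph) :=
  fun p => (p.1, ((homeomorphUnitSphereProd V3).symm p.2.1, p.2.2))

def stepcCP : V3 × (({0}ᶜ : Set V3) × Sph) → V3 × (V3 × Sph) :=
  fun p => (p.1, ((p.2.1 : V3), p.2.2))

def φ1CP : V3 × V3 → V3 × V3 := fun p => (p.1 + (2:ℝ)⁻¹ • p.2, p.2)
def φ2CP : V3 × V3 → V3 × V3 := fun p => (p.1, p.1 - p.2)

def stepdCP : V3 × (V3 × Sph) → V3 × (V3 × Sph) :=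
  fun p => ((φ2CP (φ1CP (p.1, p.2.1))).1, ((φ2CP (φ1CP (p.1, p.2.1))).2, p.2.2))

/-- The combined change of variables `(u,r,ω,σ) ↦ (v, v*, σ)`. -/
def TmapCP : (V3 × IoiPcp) × (Sph × Sph) → V3 × V3 × Sph :=
  fun q => stepdCP (stepcCP (stepbCP (EquadCP q)))

lemma TmapCP_eval (u : V3) (r : IoiPcp) (ω σ : Sph) :
    TmapCP ((u, r), (ω, σ)) = (u + (2:ℝ)⁻¹ • ((r:ℝ) • (ω:V3)),
      ((u + (2:ℝ)⁻¹ • ((r:ℝ) • (ω:V3))) - (r:ℝ) • (ω:V3), σ)) := rfl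

lemma MP_ECP : MeasurePreserving (⇑EquadCP) ρcp
    ((volume : Measure V3).prod (((sphμ.prod ν2cp)).prod sphμ)) := by
  have h1 := MeasureTheory.measurePreserving_prodAssoc (volume : Measure V3) ν2cp
    (sphμ.prod sphμ)
  have h2 : MeasurePreserving
      (⇑(MeasurableEquiv.prodAssoc.symm.trans
        ((MeasurableEquiv.prodComm : IoiPcp × Sph ≃ᵐ Sph × IoiPcp).prodCongr
          (MeasurableEquiv.refl Sph))))
      (ν2cp.prod (sphμ.prod sphμ)) ((sphμ.prod ν2cp).prod sphμ) := by
    have ha := (MeasureTheory.measurePreserving_prodAssoc ν2cp sphμ sphμ).symm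
      MeasurableEquiv.prodAssoc
    have hb : MeasurePreserving
        (⇑((MeasurableEquiv.prodComm : IoiPcp × Sph ≃ᵐ Sph × IoiPcp).prodCongr
          (MeasurableEquiv.refl Sph)))
        ((ν2cp.prod sphμ).prod sphμ) ((sphμ.prod ν2cp).prod sphμ) :=
      (MeasureTheory.Measure.measurePreserving_swap).prod (MeasurePreserving.id sphμ)
    exact hb.comp ha
  exact ((MeasurePreserving.id (volume : Measure V3)).prod h2).comp h1

lemma MP_bCP : MeasurePreserving stepbCP
    ((volume : Measure V3).prod (((sphμ.prod ν2cp)).prod sphμ))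
    ((volume : Measure V3).prod (((volume : Measure V3).comap (↑) :
        Measure ({0}ᶜ : Set V3)).prod sphμ)) := by
  have hp := polarMPcp.symm (homeomorphUnitSphereProd V3).toMeasurableEquiv
  haveI : SFinite ((sphμ.prod ν2cp).prod sphμ) := by
    haveI : SigmaFinite (sphμ.prod ν2cp) := inferInstance
    infer_instance
  exact (MeasurePreserving.id _).prod (hp.prod (MeasurePreserving.id sphμ))

instance : SFinite ((volume : Measure V3).comap ((↑) : ({0}ᶜ : Set V3) → V3)) := by
  rw [← (polarMPcp.symm (homeomorphUnitSphereProd V3).toMeasurableEquiv).map_eq]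
  infer_instance

lemma MP_cCP : MeasurePreserving stepcCP
    ((volume : Measure V3).prod (((volume : Measure V3).comap (↑) :
        Measure ({0}ᶜ : Set V3)).prod sphμ))
    ((volume : Measure V3).prod ((volume : Measure V3).prod sphμ)) := by
  have hval : MeasurePreserving ((↑) : ({0}ᶜ : Set V3) → V3)
      ((volume : Measure V3).comap (↑)) (volume : Measure V3) := by
    refine ⟨measurable_subtype_coe, ?_⟩
    rw [(MeasurableEmbedding.subtype_coe (measurableSet_singleton (0:V3)).compl).map_comap,
      Subtype.range_coe, MeasureTheory.restrict_compl_singleton]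
  exact (MeasurePreserving.id _).prod (hval.prod (MeasurePreserving.id sphμ))

lemma MP_LCP : MeasurePreserving (φ2CP ∘ φ1CP)
    ((volume : Measure V3).prod (volume : Measure V3))
    ((volume : Measure V3).prod (volume : Measure V3)) := by
  have h1 : MeasurePreserving φ1CP ((volume : Measure V3).prod volume)
      ((volume : Measure V3).prod volume) := by
    have hψ : MeasurePreserving (fun p : V3 × V3 => (p.1, p.2 + (2:ℝ)⁻¹ • p.1))
        ((volume : Measure V3).prod volume) ((volume : Measure V3).prod volume) := by
      exact MeasurePreserving.skew_product (g := fun a x => x + (2:ℝ)⁻¹ • a)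
        (MeasurePreserving.id _)
        (by fun_prop)
        (Eventually.of_forall fun a =>
          (measurePreserving_add_right (volume : Measure V3) ((2:ℝ)⁻¹ • a)).map_eq)
    have : φ1CP = Prod.swap ∘ (fun p : V3 × V3 => (p.1, p.2 + (2:ℝ)⁻¹ • p.1)) ∘ Prod.swap := rfl
    rw [this]
    exact (MeasureTheory.Measure.measurePreserving_swap).comp
      (hψ.comp (MeasureTheory.Measure.measurePreserving_swap))
  have h2 : MeasurePreserving φ2CP ((volume : Measure V3).prod volume)
      ((volume : Measure V3).prod volume) := by
    exact MeasurePreserving.skew_product (g := fun a x => a - x)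
      (MeasurePreserving.id _)
      (measurable_fst.sub measurable_snd)
      (Eventually.of_forall fun a =>
        (MeasureTheory.Measure.measurePreserving_sub_left (volume : Measure V3) a).map_eq)
  exact h2.comp h1

lemma MP_dCP : MeasurePreserving stepdCP
    ((volume : Measure V3).prod ((volume : Measure V3).prod sphμ)) μVVS := by
  have hassoc := MeasureTheory.measurePreserving_prodAssoc (volume : Measure V3)
    (volume : Measure V3) sphμ
  have h1 : MeasurePreserving (fun p : V3 × (V3 × Sph) => ((p.1, p.2.1), p.2.2))
      ((volume : Measure V3).prod ((volume : Measure V3).prod sphμ))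
      (((volume : Measure V3).prod volume).prod sphμ) :=
    hassoc.symm MeasurableEquiv.prodAssoc
  have h2 : MeasurePreserving (Prod.map (φ2CP ∘ φ1CP) (id : Sph → Sph))
      (((volume : Measure V3).prod volume).prod sphμ)
      (((volume : Measure V3).prod volume).prod sphμ) :=
    MP_LCP.prod (MeasurePreserving.id sphμ)
  have h3 : MeasurePreserving (⇑MeasurableEquiv.prodAssoc)
      (((volume : Measure V3).prod volume).prod sphμ) μVVS := by
    unfold μVVS μVS; exact hassoc
  have : stepdCP = (⇑MeasurableEquiv.prodAssoc) ∘ (Prod.map (φ2CP ∘ φ1CP) id) ∘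
      (fun p : V3 × (V3 × Sph) => ((p.1, p.2.1), p.2.2)) := rfl
  rw [this]
  exact h3.comp (h2.comp h1)

lemma MP_TCP : MeasurePreserving TmapCP ρcp μVVS := by
  have : TmapCP = stepdCP ∘ stepcCP ∘ stepbCP ∘ (⇑EquadCP) := rfl
  rw [this]
  exact MP_dCP.comp (MP_cCP.comp (MP_bCP.comp MP_ECP))

lemma TmapCP_eval' (u : V3) (r : IoiPcp) (ω σ : Sph) :
    TmapCP ((u, r), (ω, σ)) = (u + ((2:ℝ)⁻¹ * (r:ℝ)) • (ω:V3),
      (u - ((2:ℝ)⁻¹ * (r:ℝ)) • (ω:V3), σ)) := by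
  rw [TmapCP_eval]
  refine Prod.ext ?_ (Prod.ext ?_ rfl)
  · simp [smul_smul]
  · show u + (2:ℝ)⁻¹ • ((r:ℝ) • (ω:V3)) - (r:ℝ) • (ω:V3) = u - ((2:ℝ)⁻¹ * (r:ℝ)) • (ω:V3)
    rw [smul_smul]
    module

lemma collide_eval (u : V3) (r : ℝ) (hr : 0 < r) (ω σ : Sph) :
    ‖(u + ((2:ℝ)⁻¹ * r) • (ω:V3)) - (u - ((2:ℝ)⁻¹ * r) • (ω:V3))‖ = r
    ∧ cosΘ (u + ((2:ℝ)⁻¹ * r) • (ω:V3)) (u - ((2:ℝ)⁻¹ * r) • (ω:V3)) σ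
        = ⟪(ω:V3), (σ:V3)⟫_ℝ
    ∧ vP (u + ((2:ℝ)⁻¹ * r) • (ω:V3)) (u - ((2:ℝ)⁻¹ * r) • (ω:V3)) σ
        = u + ((2:ℝ)⁻¹ * r) • (σ:V3)
    ∧ wP (u + ((2:ℝ)⁻¹ * r) • (ω:V3)) (u - ((2:ℝ)⁻¹ * r) • (ω:V3)) σ
        = u - ((2:ℝ)⁻¹ * r) • (σ:V3) := by
  have hω : ‖(ω:V3)‖ = 1 := mem_sphere_zero_iff_norm.1 ω.2
  have hdiff : (u + ((2:ℝ)⁻¹ * r) • (ω:V3)) - (u - ((2:ℝ)⁻¹ * r) • (ω:V3)) = r • (ω:V3) := by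
    module
  have hnorm : ‖(u + ((2:ℝ)⁻¹ * r) • (ω:V3)) - (u - ((2:ℝ)⁻¹ * r) • (ω:V3))‖ = r := by
    rw [hdiff, norm_smul, hω, Real.norm_eq_abs, abs_of_pos hr, mul_one]
  have hsum2 : (2:ℝ)⁻¹ • ((u + ((2:ℝ)⁻¹ * r) • (ω:V3)) + (u - ((2:ℝ)⁻¹ * r) • (ω:V3))) = u := by
    module
  refine ⟨hnorm, ?_, ?_, ?_⟩
  · rw [cosΘ, hdiff, real_inner_smul_left, norm_smul, hω, Real.norm_eq_abs, abs_of_pos hr]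
    field_simp
  · rw [vP, hnorm, hsum2]
  · rw [wP, hnorm, hsum2]

lemma ae_inner_Ioo_cp : ∀ᵐ q : (V3 × IoiPcp) × (Sph × Sph) ∂ρcp,
    ⟪(q.2.1 : V3), (q.2.2 : V3)⟫_ℝ ∈ Set.Ioo (-1:ℝ) 1 := by
  set N2 : Set (Sph × Sph) := {y | (y.1:V3) = (y.2:V3) ∨ (y.1:V3) = -(y.2:V3)} with hN2def
  have hN2meas : MeasurableSet N2 := by
    apply MeasurableSet.union
    · exact measurableSet_eq_fun (measurable_subtype_coe.comp measurable_fst)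
        (measurable_subtype_coe.comp measurable_snd)
    · exact measurableSet_eq_fun (measurable_subtype_coe.comp measurable_fst)
        ((measurable_subtype_coe.comp measurable_snd).neg)
  have hN2 : (sphμ.prod sphμ) N2 = 0 := by
    rw [Measure.prod_apply hN2meas]
    have hz : ∀ ω : Sph, sphμ (Prod.mk ω ⁻¹' N2) = 0 := by
      intro ω
      have hsub : Prod.mk ω ⁻¹' N2 ⊆ {ω} ∪ {⟨-(ω:V3), by
          simpa [mem_sphere_zero_iff_norm] using mem_sphere_zero_iff_norm.1 ω.2⟩} := by
        intro σ hσ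
        rcases hσ with h | h
        · left; exact Set.mem_singleton_iff.2 (Subtype.ext h.symm)
        · right; refine Set.mem_singleton_iff.2 (Subtype.ext ?_)
          show (σ : V3) = -(ω:V3)
          rw [h]; simp
      refine measure_mono_null hsub ?_
      refine measure_union_null (sphμ_singleton_cp _) (sphμ_singleton_cp _)
    simp [hz]
  have hpre : ρcp (Prod.snd ⁻¹' N2) = 0 := by
    have heq : (Prod.snd ⁻¹' N2 : Set ((V3 × IoiPcp) × (Sph × Sph))) = univ ×ˢ N2 := by
      ext q; simp
    rw [ρcp_def, heq, Measure.prod_prod, hN2, mul_zero]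
  have hae : ∀ᵐ q : (V3 × IoiPcp) × (Sph × Sph) ∂ρcp, q.2 ∉ N2 := by
    rw [ae_iff]
    refine measure_mono_null ?_ hpre
    intro q hq
    simpa using not_not.mp hq
  filter_upwards [hae] with q hq
  have hω : ‖(q.2.1:V3)‖ = 1 := mem_sphere_zero_iff_norm.1 q.2.1.2
  have hσ : ‖(q.2.2:V3)‖ = 1 := mem_sphere_zero_iff_norm.1 q.2.2.2
  have habs : |⟪(q.2.1 : V3), (q.2.2 : V3)⟫_ℝ| ≤ 1 := by
    have := abs_real_inner_le_norm (q.2.1:V3) (q.2.2:V3)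
    rwa [hω, hσ, one_mul] at this
  have hne1 : ⟪(q.2.1 : V3), (q.2.2 : V3)⟫_ℝ ≠ 1 := by
    intro h1
    exact hq (Or.inl ((inner_eq_one_iff_of_norm_eq_one hω hσ).1 h1))
  have hnem1 : ⟪(q.2.1 : V3), (q.2.2 : V3)⟫_ℝ ≠ -1 := by
    intro h1
    have h2 : ⟪(q.2.1 : V3), -(q.2.2:V3)⟫_ℝ = 1 := by
      rw [inner_neg_right, h1]; norm_num
    have h3 : ‖-(q.2.2:V3)‖ = 1 := by rwa [norm_neg]
    exact hq (Or.inr ((inner_eq_one_iff_of_norm_eq_one hω h3).1 h2))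
  constructor
  · exact lt_of_le_of_ne (neg_le_of_abs_le habs) (fun h => hnem1 h.symm)
  · exact lt_of_le_of_ne (le_of_abs_le habs) hne1

end AuxCP


/-- **Proposition 4.1.** If `B₀(|z|, cos θ)` is completely positive in `cos²θ`,
then the quartic collision integral `∫∫∫ B₀ h h* h' h*' dσ dv dv*` is nonnegative
whenever it is absolutely convergent. -/
theorem quartic_integral_nonneg_of_completely_positive
    (B₀ : ℝ → ℝ → ℝ) (hB₀ : Measurable (Function.uncurry B₀))
    (a : ℕ → ℝ → ℝ) (hameas : ∀ n, Measurable (a n))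
    (hapos : ∀ n, ∀ r > (0:ℝ), 0 ≤ a n r)
    (hsum : ∀ r > (0:ℝ), ∀ t ∈ Set.Ioo (-1:ℝ) 1,
      HasSum (fun n => a n r * t ^ (2 * n)) (B₀ r t))
    (h : V3 → ℝ) (hh : Measurable h)
    (hint : Integrable (fun p : V3 × V3 × Sph =>
        B₀ ‖p.1 - p.2.1‖ (cosΘ p.1 p.2.1 p.2.2)
          * |h p.1 * h p.2.1 * h (vP p.1 p.2.1 p.2.2) * h (wP p.1 p.2.1 p.2.2)|) μVVS) :
    0 ≤ ∫ p : V3 × V3 × Sph,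
        B₀ ‖p.1 - p.2.1‖ (cosΘ p.1 p.2.1 p.2.2)
          * (h p.1 * h p.2.1 * h (vP p.1 p.2.1 p.2.2) * h (wP p.1 p.2.1 p.2.2)) ∂μVVS := by
  classical
  -- measurability of the pieces of the integrand
  have hnormm : Measurable fun p : V3 × V3 × Sph => ‖p.1 - p.2.1‖ :=
    (measurable_fst.sub (measurable_fst.comp measurable_snd)).norm
  have hσm : Measurable fun p : V3 × V3 × Sph => ((p.2.2 : V3)) :=
    measurable_subtype_coe.comp (measurable_snd.comp measurable_snd)
  have hcosm : Measurable fun p : V3 × V3 × Sph => cosΘ p.1 p.2.1 p.2.2 := by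
    unfold cosΘ
    exact (Measurable.inner (measurable_fst.sub (measurable_fst.comp measurable_snd)) hσm).div
      hnormm
  have hBm : Measurable fun p : V3 × V3 × Sph => B₀ ‖p.1 - p.2.1‖ (cosΘ p.1 p.2.1 p.2.2) :=
    hB₀.comp (hnormm.prodMk hcosm)
  have hvPm : Measurable fun p : V3 × V3 × Sph => vP p.1 p.2.1 p.2.2 := by
    unfold vP
    exact ((measurable_fst.add (measurable_fst.comp measurable_snd)).const_smul ((2:ℝ)⁻¹)).add
      ((measurable_const.mul hnormm).smul hσm)
  have hwPm : Measurable fun p : V3 × V3 × Sph => wP p.1 p.2.1 p.2.2 := by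
    unfold wP
    exact ((measurable_fst.add (measurable_fst.comp measurable_snd)).const_smul ((2:ℝ)⁻¹)).sub
      ((measurable_const.mul hnormm).smul hσm)
  have hHm : Measurable fun p : V3 × V3 × Sph =>
      h p.1 * h p.2.1 * h (vP p.1 p.2.1 p.2.2) * h (wP p.1 p.2.1 p.2.2) :=
    (((hh.comp measurable_fst).mul (hh.comp (measurable_fst.comp measurable_snd))).mul
      (hh.comp hvPm)).mul (hh.comp hwPm)
  have hFm : Measurable fun p : V3 × V3 × Sph =>
      B₀ ‖p.1 - p.2.1‖ (cosΘ p.1 p.2.1 p.2.2)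
        * (h p.1 * h p.2.1 * h (vP p.1 p.2.1 p.2.2) * h (wP p.1 p.2.1 p.2.2)) := hBm.mul hHm
  have hFam : Measurable fun p : V3 × V3 × Sph =>
      B₀ ‖p.1 - p.2.1‖ (cosΘ p.1 p.2.1 p.2.2)
        * |h p.1 * h p.2.1 * h (vP p.1 p.2.1 p.2.2) * h (wP p.1 p.2.1 p.2.2)| := hBm.mul hHm.abs
  -- transported integrand pieces
  set Ψ : (V3 × IoiPcp) → Sph → ℝ := fun p τ =>
    h (p.1 + ((2:ℝ)⁻¹ * (p.2:ℝ)) • (τ:V3)) * h (p.1 - ((2:ℝ)⁻¹ * (p.2:ℝ)) • (τ:V3)) with hΨdef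
  have hcomp : ∀ q : (V3 × IoiPcp) × (Sph × Sph),
      (B₀ ‖(TmapCP q).1 - (TmapCP q).2.1‖ (cosΘ (TmapCP q).1 (TmapCP q).2.1 (TmapCP q).2.2)
        * (h (TmapCP q).1 * h (TmapCP q).2.1 * h (vP (TmapCP q).1 (TmapCP q).2.1 (TmapCP q).2.2)
          * h (wP (TmapCP q).1 (TmapCP q).2.1 (TmapCP q).2.2)))
      = B₀ (q.1.2:ℝ) ⟪(q.2.1:V3), (q.2.2:V3)⟫_ℝ * (Ψ q.1 q.2.1 * Ψ q.1 q.2.2) := by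
    rintro ⟨⟨u, r⟩, ⟨ω, σ⟩⟩
    rw [TmapCP_eval']
    obtain ⟨h1, h2, h3, h4⟩ := collide_eval u (r:ℝ) r.2 ω σ
    simp only [h1, h2, h3, h4, hΨdef]
    ring
  have hcompa : ∀ q : (V3 × IoiPcp) × (Sph × Sph),
      (B₀ ‖(TmapCP q).1 - (TmapCP q).2.1‖ (cosΘ (TmapCP q).1 (TmapCP q).2.1 (TmapCP q).2.2)
        * |h (TmapCP q).1 * h (TmapCP q).2.1 * h (vP (TmapCP q).1 (TmapCP q).2.1 (TmapCP q).2.2)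
          * h (wP (TmapCP q).1 (TmapCP q).2.1 (TmapCP q).2.2)|)
      = B₀ (q.1.2:ℝ) ⟪(q.2.1:V3), (q.2.2:V3)⟫_ℝ * |Ψ q.1 q.2.1 * Ψ q.1 q.2.2| := by
    rintro ⟨⟨u, r⟩, ⟨ω, σ⟩⟩
    rw [TmapCP_eval']
    obtain ⟨h1, h2, h3, h4⟩ := collide_eval u (r:ℝ) r.2 ω σ
    simp only [h1, h2, h3, h4, hΨdef]
    congr 1
    congr 1
    ring
  set Gabs : (V3 × IoiPcp) × (Sph × Sph) → ℝ := fun q =>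
    B₀ (q.1.2:ℝ) ⟪(q.2.1:V3), (q.2.2:V3)⟫_ℝ * |Ψ q.1 q.2.1 * Ψ q.1 q.2.2| with hGabsdef
  set Gn : ℕ → (V3 × IoiPcp) × (Sph × Sph) → ℝ := fun n q =>
    a n (q.1.2:ℝ) * ⟪(q.2.1:V3), (q.2.2:V3)⟫_ℝ ^ (2*n) * (Ψ q.1 q.2.1 * Ψ q.1 q.2.2) with hGndef
  -- push the integrability hypothesis through the change of variables
  have hintT : Integrable Gabs ρcp := by
    rw [← MP_TCP.map_eq] at hint
    have h1 := (integrable_map_measure hFam.aestronglyMeasurable MP_TCP.aemeasurable).mp hint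
    exact h1.congr (Eventually.of_forall fun q => hcompa q)
  -- measurability on the new side
  have hrc : Measurable fun q : (V3 × IoiPcp) × (Sph × Sph) => ((q.1.2 : ℝ)) :=
    measurable_subtype_coe.comp (measurable_snd.comp measurable_fst)
  have hti : Measurable fun q : (V3 × IoiPcp) × (Sph × Sph) => ⟪(q.2.1:V3), (q.2.2:V3)⟫_ℝ :=
    Measurable.inner (measurable_subtype_coe.comp (measurable_fst.comp measurable_snd))
      (measurable_subtype_coe.comp (measurable_snd.comp measurable_snd))
  have hΨm : Measurable fun q : (V3 × IoiPcp) × (Sph × Sph) => Ψ q.1 q.2.1 * Ψ q.1 q.2.2 := by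
    have hu : Measurable fun q : (V3 × IoiPcp) × (Sph × Sph) => q.1.1 :=
      measurable_fst.comp measurable_fst
    have hω : Measurable fun q : (V3 × IoiPcp) × (Sph × Sph) => ((q.2.1 : V3)) :=
      measurable_subtype_coe.comp (measurable_fst.comp measurable_snd)
    have hσ2 : Measurable fun q : (V3 × IoiPcp) × (Sph × Sph) => ((q.2.2 : V3)) :=
      measurable_subtype_coe.comp (measurable_snd.comp measurable_snd)
    have hs : Measurable fun q : (V3 × IoiPcp) × (Sph × Sph) => (2:ℝ)⁻¹ * (q.1.2:ℝ) :=
      measurable_const.mul hrc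
    simp only [hΨdef]
    exact (((hh.comp (hu.add (hs.smul hω))).mul (hh.comp (hu.sub (hs.smul hω)))).mul
      ((hh.comp (hu.add (hs.smul hσ2))).mul (hh.comp (hu.sub (hs.smul hσ2)))))
  have hGnm : ∀ n, Measurable (Gn n) := by
    intro n
    simp only [hGndef]
    exact (((hameas n).comp hrc).mul (hti.pow_const _)).mul hΨm
  -- a.e. facts
  have hposn : ∀ (q : (V3 × IoiPcp) × (Sph × Sph)) (m : ℕ),
      0 ≤ a m (q.1.2:ℝ) * ⟪(q.2.1:V3), (q.2.2:V3)⟫_ℝ ^ (2*m) := by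
    intro q m
    refine mul_nonneg (hapos m _ q.1.2.2) ?_
    rw [pow_mul]
    positivity
  have hdom : ∀ n, ∀ᵐ q ∂ρcp, ‖Gn n q‖ ≤ Gabs q := by
    intro n
    filter_upwards [ae_inner_Ioo_cp] with q hq
    have hr : (0:ℝ) < q.1.2 := q.1.2.2
    have hS : HasSum (fun m => a m (q.1.2:ℝ) * ⟪(q.2.1:V3), (q.2.2:V3)⟫_ℝ ^ (2*m))
        (B₀ (q.1.2:ℝ) ⟪(q.2.1:V3), (q.2.2:V3)⟫_ℝ) := hsum _ hr _ hq
    have hkey : a n (q.1.2:ℝ) * ⟪(q.2.1:V3), (q.2.2:V3)⟫_ℝ ^ (2*n)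
        ≤ B₀ (q.1.2:ℝ) ⟪(q.2.1:V3), (q.2.2:V3)⟫_ℝ :=
      le_hasSum hS n (fun m _ => hposn q m)
    simp only [hGndef, hGabsdef]
    rw [Real.norm_eq_abs, abs_mul, abs_of_nonneg (hposn q n)]
    exact mul_le_mul_of_nonneg_right hkey (abs_nonneg _)
  have hGnint : ∀ n, Integrable (Gn n) ρcp := fun n =>
    hintT.mono' (hGnm n).aestronglyMeasurable (hdom n)
  have haeSum : ∀ᵐ q ∂ρcp, HasSum (fun n => Gn n q)
      (B₀ (q.1.2:ℝ) ⟪(q.2.1:V3), (q.2.2:V3)⟫_ℝ * (Ψ q.1 q.2.1 * Ψ q.1 q.2.2)) := by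
    filter_upwards [ae_inner_Ioo_cp] with q hq
    have hr : (0:ℝ) < q.1.2 := q.1.2.2
    have hS := (hsum _ hr _ hq).mul_right (Ψ q.1 q.2.1 * Ψ q.1 q.2.2)
    simpa only [hGndef] using hS
  have htsum_ne : (∑' n, ∫⁻ q, ‖Gn n q‖₊ ∂ρcp) ≠ ⊤ := by
    rw [← lintegral_tsum (fun n => ((hGnm n).nnnorm.coe_nnreal_ennreal).aemeasurable)]
    have hle : (∫⁻ q, ∑' n, (‖Gn n q‖₊ : ℝ≥0∞) ∂ρcp) ≤ ∫⁻ q, (‖Gabs q‖₊ : ℝ≥0∞) ∂ρcp := by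
      refine lintegral_mono_ae ?_
      filter_upwards [ae_inner_Ioo_cp] with q hq
      have hr : (0:ℝ) < q.1.2 := q.1.2.2
      have hS : HasSum (fun m => a m (q.1.2:ℝ) * ⟪(q.2.1:V3), (q.2.2:V3)⟫_ℝ ^ (2*m))
          (B₀ (q.1.2:ℝ) ⟪(q.2.1:V3), (q.2.2:V3)⟫_ℝ) := hsum _ hr _ hq
      have hB0 : 0 ≤ B₀ (q.1.2:ℝ) ⟪(q.2.1:V3), (q.2.2:V3)⟫_ℝ := by
        rw [← hS.tsum_eq]
        exact tsum_nonneg (fun m => hposn q m)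
      have hS2 := hS.mul_right |Ψ q.1 q.2.1 * Ψ q.1 q.2.2|
      have hstep : (∑' n, (‖Gn n q‖₊ : ℝ≥0∞))
          = ∑' n, ENNReal.ofReal
              (a n (q.1.2:ℝ) * ⟪(q.2.1:V3), (q.2.2:V3)⟫_ℝ ^ (2*n)
                * |Ψ q.1 q.2.1 * Ψ q.1 q.2.2|) := by
        refine tsum_congr fun m => ?_
        rw [← enorm_eq_nnnorm, Real.enorm_eq_ofReal_abs]
        congr 1
        simp only [hGndef]
        rw [abs_mul, abs_of_nonneg (hposn q m)]
      rw [hstep, ← ENNReal.ofReal_tsum_of_nonneg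
        (fun m => mul_nonneg (hposn q m) (abs_nonneg _)) hS2.summable, hS2.tsum_eq]
      rw [← enorm_eq_nnnorm, Real.enorm_eq_ofReal_abs]
      simp only [hGabsdef]
      rw [abs_of_nonneg (mul_nonneg hB0 (abs_nonneg _))]
    exact ne_top_of_le_ne_top hintT.2.ne hle
  -- main identity
  have hmain : (∫ p : V3 × V3 × Sph,
      B₀ ‖p.1 - p.2.1‖ (cosΘ p.1 p.2.1 p.2.2)
        * (h p.1 * h p.2.1 * h (vP p.1 p.2.1 p.2.2) * h (wP p.1 p.2.1 p.2.2)) ∂μVVS)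
      = ∑' n, ∫ q, Gn n q ∂ρcp := by
    rw [← MP_TCP.map_eq, integral_map MP_TCP.aemeasurable hFm.aestronglyMeasurable]
    have hcongr : (fun q => B₀ ‖(TmapCP q).1 - (TmapCP q).2.1‖
        (cosΘ (TmapCP q).1 (TmapCP q).2.1 (TmapCP q).2.2)
        * (h (TmapCP q).1 * h (TmapCP q).2.1
          * h (vP (TmapCP q).1 (TmapCP q).2.1 (TmapCP q).2.2)
          * h (wP (TmapCP q).1 (TmapCP q).2.1 (TmapCP q).2.2)))
        =ᵐ[ρcp] fun q => ∑' n, Gn n q := by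
      filter_upwards [haeSum] with q hq
      rw [hcomp q, ← hq.tsum_eq]
    rw [integral_congr_ae hcongr]
    exact integral_tsum (fun n => (hGnm n).aestronglyMeasurable) htsum_ne
  rw [hmain]
  refine tsum_nonneg fun n => ?_
  -- positivity of each term via Fubini and the sphere-sphere lemma
  have hInt := hGnint n
  rw [ρcp_def] at hInt ⊢
  rw [MeasureTheory.integral_prod _ hInt]
  refine integral_nonneg_of_ae ?_
  filter_upwards [hInt.prod_right_ae] with p hp
  have hr : (0:ℝ) < p.2 := p.2.2
  have hc0 : 0 ≤ a n (p.2:ℝ) := hapos n _ hr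
  set ψ : Sph → ℝ := fun τ =>
    h (p.1 + ((2:ℝ)⁻¹ * (p.2:ℝ)) • (τ:V3)) * h (p.1 - ((2:ℝ)⁻¹ * (p.2:ℝ)) • (τ:V3)) with hψdef
  have hψmeas : Measurable ψ := by
    have hcoe : Measurable fun τ : Sph => ((τ : V3)) := measurable_subtype_coe
    fun_prop
  have heq : ∀ y : Sph × Sph, Gn n (p, y)
      = a n (p.2:ℝ) * (⟪(y.1:V3), (y.2:V3)⟫_ℝ ^ (2*n) * (ψ y.1 * ψ y.2)) := by
    intro y
    simp only [hGndef, hΨdef, hψdef]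
    ring
  rcases eq_or_lt_of_le hc0 with hceq | hcpos
  · simp only [heq, ← hceq, zero_mul]
    simp
  · have hfib : Integrable
        (fun y : Sph × Sph => ⟪(y.1:V3), (y.2:V3)⟫_ℝ ^ (2*n) * (ψ y.1 * ψ y.2))
        (sphμ.prod sphμ) := by
      have h2 := hp.const_mul (a n (p.2:ℝ))⁻¹
      refine h2.congr (Eventually.of_forall fun y => ?_)
      show (a n (p.2:ℝ))⁻¹ * Gn n (p, y) = _
      rw [heq y, inv_mul_cancel_left₀ hcpos.ne']
    have hSS := SS_cp n ψ hψmeas hfib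
    calc (0:ℝ) ≤ a n (p.2:ℝ) * ∫ y : Sph × Sph,
          ⟪(y.1:V3), (y.2:V3)⟫_ℝ ^ (2*n) * (ψ y.1 * ψ y.2) ∂(sphμ.prod sphμ) :=
        mul_nonneg hc0 hSS
      _ = ∫ y, Gn n (p, y) ∂(sphμ.prod sphμ) := by
        rw [← MeasureTheory.integral_const_mul]
        exact integral_congr_ae (Eventually.of_forall fun y => (heq y).symm)


end
end

section
/- Let a_n ≥ 0 for n = 0, 1, 2, ..., and define K(t) = Σ_{n=0}^∞ a_n t^{2n} ∈ [0,∞] for t ∈ [−1,1]. Then for any Borel function h : S² → ℝ satisfying ∫_{S²×S²} K(⟨ω,σ⟩)|h(ω)h(σ)| dω dσ < ∞, it holds that ∫_{S²×S²} K(⟨ω,σ⟩) h(ω) h(σ) dω dσ ≥ 0. -/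
open MeasureTheory Real Filter Set
open scoped InnerProductSpace ENNReal

noncomputable section

/-- The kernel `K(t) = Σₙ aₙ t^{2n} ∈ [0,∞]`. -/
def Ker (a : ℕ → ℝ) (t : ℝ) : ℝ≥0∞ := ∑' n, ENNReal.ofReal (a n * t ^ (2 * n))

instance sphμ_finite : IsFiniteMeasure sphμ := by unfold sphμ; infer_instance

lemma sph_coord_abs_le (ω : Sph) (i : Fin 3) : |(ω : V3) i| ≤ 1 := by
  have h1 : ‖(ω : V3)‖ = 1 := by
    simpa using mem_sphere_zero_iff_norm.mp ω.2
  have h2 : (ω : V3) i = ⟪EuclideanSpace.single i (1 : ℝ), (ω : V3)⟫_ℝ := by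
    simp [EuclideanSpace.inner_single_left]
  rw [h2]
  calc |⟪EuclideanSpace.single i (1 : ℝ), (ω : V3)⟫_ℝ|
      ≤ ‖EuclideanSpace.single i (1 : ℝ)‖ * ‖(ω : V3)‖ := abs_real_inner_le_norm _ _
    _ ≤ 1 := by rw [h1, EuclideanSpace.norm_single]; simp

lemma sph_inner_eq (ω σ : Sph) :
    ⟪(ω : V3), (σ : V3)⟫_ℝ = ∑ i : Fin 3, (ω : V3) i * (σ : V3) i := by
  simp [PiLp.inner_apply, RCLike.inner_apply]
  exact Finset.sum_congr rfl (fun i _ => mul_comm _ _)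

lemma sph_measurable_coord (i : Fin 3) : Measurable fun ω : Sph => (ω : V3) i :=
  ((EuclideanSpace.proj i : V3 →L[ℝ] ℝ).continuous.comp continuous_subtype_val).measurable

lemma sph_inner_continuous :
    Continuous fun p : Sph × Sph => ⟪((p.1 : Sph) : V3), ((p.2 : Sph) : V3)⟫_ℝ :=
  Continuous.inner (continuous_subtype_val.comp continuous_fst)
    (continuous_subtype_val.comp continuous_snd)

lemma integrable_of_bdd {f : Sph × Sph → ℝ} (hm : Measurable f) (C : ℝ)
    (hb : ∀ p, |f p| ≤ C) : Integrable f (sphμ.prod sphμ) :=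
  Integrable.mono' (integrable_const C) hm.aestronglyMeasurable
    (ae_of_all _ (fun p => by simpa [Real.norm_eq_abs] using hb p))

/-- For any `n`, `∫∫ ⟨ω,σ⟩ⁿ g(ω) g(σ) ≥ 0` for bounded measurable `g`. -/
lemma monomial_int_nonneg (n : ℕ) (g : Sph → ℝ) (hg : Measurable g) (C : ℝ)
    (hgb : ∀ ω, |g ω| ≤ C) :
    0 ≤ ∫ p : Sph × Sph, ⟪(p.1 : V3), (p.2 : V3)⟫_ℝ ^ n * (g p.1 * g p.2)
        ∂(sphμ.prod sphμ) := by
  set F : (Fin n → Fin 3) → Sph → ℝ := fun c ω => (∏ j, (ω : V3) (c j)) * g ω with hF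
  have hFmeas : ∀ c, Measurable (F c) := fun c =>
    (Finset.measurable_prod _ (fun j _ => sph_measurable_coord (c j))).mul hg
  have hFb : ∀ c ω, |F c ω| ≤ |C| := by
    intro c ω
    rw [hF, abs_mul]
    have h1 : |∏ j, (ω : V3) (c j)| ≤ 1 := by
      rw [Finset.abs_prod]
      calc (∏ j, |(ω : V3) (c j)|) ≤ ∏ _j : Fin n, 1 :=
        Finset.prod_le_prod (fun j _ => abs_nonneg _) (fun j _ => sph_coord_abs_le ω (c j))
      _ = 1 := by simp
    calc |∏ j, (ω : V3) (c j)| * |g ω| ≤ 1 * |C| := by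
          apply mul_le_mul h1 ((hgb ω).trans (le_abs_self C)) (abs_nonneg _) zero_le_one
      _ = |C| := one_mul _
  have hFint : ∀ c, Integrable (F c) sphμ := by
    intro c
    exact Integrable.mono' (integrable_const |C|) (hFmeas c).aestronglyMeasurable
      (ae_of_all _ (fun ω => by simpa [Real.norm_eq_abs] using hFb c ω))
  have key : ∀ p : Sph × Sph, ⟪(p.1 : V3), (p.2 : V3)⟫_ℝ ^ n * (g p.1 * g p.2)
      = ∑ c : Fin n → Fin 3, F c p.1 * F c p.2 := by
    intro p
    rw [sph_inner_eq, Fintype.sum_pow, Finset.sum_mul]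
    refine Finset.sum_congr rfl (fun c _ => ?_)
    rw [Finset.prod_mul_distrib, hF]
    ring
  calc (0:ℝ) ≤ ∑ c : Fin n → Fin 3, (∫ ω, F c ω ∂sphμ) ^ 2 :=
        Finset.sum_nonneg (fun c _ => sq_nonneg _)
    _ = ∑ c : Fin n → Fin 3, ∫ p : Sph × Sph, F c p.1 * F c p.2 ∂(sphμ.prod sphμ) := by
        refine Finset.sum_congr rfl (fun c _ => ?_)
        rw [integral_prod_mul (f := F c) (g := F c), sq]
    _ = ∫ p : Sph × Sph, ∑ c : Fin n → Fin 3, F c p.1 * F c p.2 ∂(sphμ.prod sphμ) := by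
        rw [integral_finset_sum]
        intro c _
        exact (hFint c).mul_prod (hFint c)
    _ = _ := integral_congr_ae (ae_of_all _ (fun p => (key p).symm))


lemma sph_inner_abs_le (ω σ : Sph) : |⟪(ω : V3), (σ : V3)⟫_ℝ| ≤ 1 := by
  have h1 : ‖(ω : V3)‖ = 1 := by simpa using mem_sphere_zero_iff_norm.mp ω.2
  have h2 : ‖(σ : V3)‖ = 1 := by simpa using mem_sphere_zero_iff_norm.mp σ.2
  calc |⟪(ω : V3), (σ : V3)⟫_ℝ| ≤ ‖(ω : V3)‖ * ‖(σ : V3)‖ := abs_real_inner_le_norm _ _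
    _ = 1 := by rw [h1, h2, one_mul]

lemma ker_term_nonneg (a : ℕ → ℝ) (ha : ∀ n, 0 ≤ a n) (t : ℝ) (n : ℕ) :
    0 ≤ a n * t ^ (2 * n) := by
  apply mul_nonneg (ha n)
  rw [pow_mul]
  exact pow_nonneg (sq_nonneg t) n

lemma ker_partial_toReal (a : ℕ → ℝ) (ha : ∀ n, 0 ≤ a n) (t : ℝ) (N : ℕ) :
    (∑ n ∈ Finset.range N, ENNReal.ofReal (a n * t ^ (2 * n))).toReal
      = ∑ n ∈ Finset.range N, a n * t ^ (2 * n) := by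
  rw [ENNReal.toReal_sum (fun n _ => ENNReal.ofReal_ne_top)]
  exact Finset.sum_congr rfl (fun n _ => ENNReal.toReal_ofReal (ker_term_nonneg a ha t n))

lemma ker_partial_le (a : ℕ → ℝ) (t : ℝ) (N : ℕ) :
    (∑ n ∈ Finset.range N, ENNReal.ofReal (a n * t ^ (2 * n))) ≤ Ker a t :=
  ENNReal.sum_le_tsum _

lemma ker_partial_tendsto (a : ℕ → ℝ) (ha : ∀ n, 0 ≤ a n) (t : ℝ) (hfin : Ker a t ≠ ⊤) :
    Filter.Tendsto (fun N => ∑ n ∈ Finset.range N, a n * t ^ (2 * n)) atTop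
      (nhds ((Ker a t).toReal)) := by
  have h1 : Filter.Tendsto (fun N => ∑ n ∈ Finset.range N,
      ENNReal.ofReal (a n * t ^ (2 * n))) atTop (nhds (Ker a t)) :=
    ENNReal.tendsto_nat_tsum _
  have h2 := (ENNReal.tendsto_toReal hfin).comp h1
  refine h2.congr (fun N => ?_)
  exact ker_partial_toReal a ha t N

/-- **Positive definiteness on the sphere.** If `K(t) = Σ aₙ t^{2n}` with `aₙ ≥ 0`,
then `∫∫_{S²×S²} K(⟨ω,σ⟩) h(ω) h(σ) dω dσ ≥ 0` whenever the integral is absolutely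
convergent. -/
theorem sphere_kernel_positive_definite
    (a : ℕ → ℝ) (ha : ∀ n, 0 ≤ a n) (h : Sph → ℝ) (hh : Measurable h)
    (hint : (∫⁻ p : Sph × Sph,
        Ker a ⟪(p.1 : V3), (p.2 : V3)⟫_ℝ * ENNReal.ofReal |h p.1 * h p.2|
          ∂(sphμ.prod sphμ)) < ⊤) :
    0 ≤ ∫ p : Sph × Sph,
        (Ker a ⟪(p.1 : V3), (p.2 : V3)⟫_ℝ).toReal * (h p.1 * h p.2) ∂(sphμ.prod sphμ) := by
  classical
  set μ := sphμ.prod sphμ with hμdef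
  set Kf : Sph × Sph → ℝ≥0∞ := fun p => Ker a ⟪(p.1 : V3), (p.2 : V3)⟫_ℝ with hKfdef
  have hinnerM : Measurable fun p : Sph × Sph => ⟪(p.1 : V3), (p.2 : V3)⟫_ℝ :=
    (Continuous.inner (continuous_subtype_val.comp continuous_fst)
      (continuous_subtype_val.comp continuous_snd)).measurable
  have hKerM : Measurable (Ker a) := by
    apply Measurable.ennreal_tsum
    intro n
    exact ENNReal.measurable_ofReal.comp ((measurable_id.pow_const (2 * n)).const_mul (a n))
  have hKfM : Measurable Kf := hKerM.comp hinnerM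
  have hhhM : Measurable fun p : Sph × Sph => h p.1 * h p.2 :=
    (hh.comp measurable_fst).mul (hh.comp measurable_snd)
  set G : Sph × Sph → ℝ := fun p => (Kf p).toReal * |h p.1 * h p.2| with hGdef
  have hGM : Measurable G := hKfM.ennreal_toReal.mul hhhM.abs
  have hGnn : ∀ p, 0 ≤ G p := fun p => mul_nonneg ENNReal.toReal_nonneg (abs_nonneg _)
  have hGint : Integrable G μ := by
    refine ⟨hGM.aestronglyMeasurable, ?_⟩
    rw [hasFiniteIntegral_iff_ofReal (ae_of_all _ hGnn)]
    calc (∫⁻ p, ENNReal.ofReal (G p) ∂μ)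
        ≤ ∫⁻ p, Kf p * ENNReal.ofReal |h p.1 * h p.2| ∂μ := by
          refine lintegral_mono fun p => ?_
          rw [ENNReal.ofReal_mul ENNReal.toReal_nonneg]
          exact mul_le_mul_left ENNReal.ofReal_toReal_le _
      _ < ⊤ := hint
  have hae : ∀ᵐ p ∂μ, Kf p < ⊤ ∨ h p.1 * h p.2 = 0 := by
    have h1 : ∀ᵐ p ∂μ, Kf p * ENNReal.ofReal |h p.1 * h p.2| < ⊤ :=
      ae_lt_top (hKfM.mul (ENNReal.measurable_ofReal.comp hhhM.abs)) hint.ne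
    filter_upwards [h1] with p hp
    rcases eq_top_or_lt_top (Kf p) with hK | hK
    · right
      by_contra hne
      have hpos : (0:ℝ≥0∞) < ENNReal.ofReal |h p.1 * h p.2| := by
        rw [ENNReal.ofReal_pos]
        exact abs_pos.mpr hne
      rw [hK, ENNReal.top_mul hpos.ne'] at hp
      exact absurd hp (lt_irrefl _)
    · left; exact hK
  -- truncations
  set trunc : ℕ → Sph → ℝ := fun k ω => if |h ω| ≤ (k : ℝ) then h ω else 0 with htrdef
  have htM : ∀ k, Measurable (trunc k) := fun k =>
    Measurable.ite (measurableSet_le hh.abs measurable_const) hh measurable_const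
  have htb : ∀ k ω, |trunc k ω| ≤ (k : ℝ) := by
    intro k ω
    by_cases hc : |h ω| ≤ (k : ℝ)
    · simpa [htrdef, hc] using hc
    · simp [htrdef, hc]
  have hth : ∀ k ω, |trunc k ω| ≤ |h ω| := by
    intro k ω
    by_cases hc : |h ω| ≤ (k : ℝ)
    · simp [htrdef, hc]
    · simp [htrdef, hc, abs_nonneg]
  have htzero : ∀ k ω, h ω = 0 → trunc k ω = 0 := by
    intro k ω hω
    by_cases hc : |h ω| ≤ (k : ℝ)
    · simp [htrdef, hc, hω]
    · simp [htrdef, hc]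
  have httzero : ∀ k (p : Sph × Sph), h p.1 * h p.2 = 0 → trunc k p.1 * trunc k p.2 = 0 := by
    intro k p hp
    rcases mul_eq_zero.mp hp with h0 | h0
    · rw [htzero k _ h0, zero_mul]
    · rw [htzero k _ h0, mul_zero]
  -- Step 1: nonnegativity for each truncation level
  have Hk : ∀ k : ℕ, 0 ≤ ∫ p : Sph × Sph, (Kf p).toReal * (trunc k p.1 * trunc k p.2) ∂μ := by
    intro k
    set SN : ℕ → Sph × Sph → ℝ := fun N p =>
      (∑ n ∈ Finset.range N, a n * ⟪(p.1 : V3), (p.2 : V3)⟫_ℝ ^ (2 * n))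
        * (trunc k p.1 * trunc k p.2) with hSNdef
    have hSNM : ∀ N, Measurable (SN N) := by
      intro N
      apply Measurable.mul
      · apply Finset.measurable_sum
        intro n _
        exact (hinnerM.pow_const (2 * n)).const_mul (a n)
      · exact ((htM k).comp measurable_fst).mul ((htM k).comp measurable_snd)
    have hSN_nonneg : ∀ N, 0 ≤ ∫ p, SN N p ∂μ := by
      intro N
      have hterm_int : ∀ n : ℕ, Integrable (fun p : Sph × Sph =>
          a n * (⟪(p.1 : V3), (p.2 : V3)⟫_ℝ ^ (2 * n) * (trunc k p.1 * trunc k p.2))) μ := by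
        intro n
        apply integrable_of_bdd
        · exact ((hinnerM.pow_const (2 * n)).mul
            (((htM k).comp measurable_fst).mul ((htM k).comp measurable_snd))).const_mul (a n)
        · intro p
          calc |a n * (⟪(p.1 : V3), (p.2 : V3)⟫_ℝ ^ (2 * n) * (trunc k p.1 * trunc k p.2))|
              = |a n| * (|⟪(p.1 : V3), (p.2 : V3)⟫_ℝ| ^ (2 * n) * (|trunc k p.1| * |trunc k p.2|)) := by
                rw [abs_mul, abs_mul, abs_mul, abs_pow]
            _ ≤ |a n| * (1 * ((k:ℝ) * (k:ℝ))) := by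
                apply mul_le_mul_of_nonneg_left _ (abs_nonneg _)
                apply mul_le_mul
                · exact pow_le_one₀ (abs_nonneg _) (sph_inner_abs_le p.1 p.2)
                · exact mul_le_mul (htb k p.1) (htb k p.2) (abs_nonneg _) (Nat.cast_nonneg k)
                · exact mul_nonneg (abs_nonneg _) (abs_nonneg _)
                · exact zero_le_one
            _ = |a n| * ((k:ℝ) * (k:ℝ)) := by rw [one_mul]
      have heq : ∀ p : Sph × Sph, SN N p = ∑ n ∈ Finset.range N,
          a n * (⟪(p.1 : V3), (p.2 : V3)⟫_ℝ ^ (2 * n) * (trunc k p.1 * trunc k p.2)) := by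
        intro p
        simp only [hSNdef]
        rw [Finset.sum_mul]
        exact Finset.sum_congr rfl (fun n _ => by ring)
      rw [integral_congr_ae (ae_of_all _ heq), integral_finset_sum _ (fun n _ => hterm_int n)]
      apply Finset.sum_nonneg
      intro n _
      rw [integral_const_mul]
      apply mul_nonneg (ha n)
      exact monomial_int_nonneg (2 * n) (trunc k) (htM k) (k : ℝ) (htb k)
    have hdom : ∀ N, ∀ᵐ p ∂μ, ‖SN N p‖ ≤ G p := by
      intro N
      filter_upwards [hae] with p hp
      rcases hp with hK | h0
      · rw [Real.norm_eq_abs, hSNdef, abs_mul]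
        apply mul_le_mul
        · have h1 : |∑ n ∈ Finset.range N, a n * ⟪(p.1 : V3), (p.2 : V3)⟫_ℝ ^ (2 * n)|
              = ∑ n ∈ Finset.range N, a n * ⟪(p.1 : V3), (p.2 : V3)⟫_ℝ ^ (2 * n) :=
            abs_of_nonneg (Finset.sum_nonneg fun n _ => ker_term_nonneg a ha _ n)
          rw [h1, ← ker_partial_toReal a ha]
          exact ENNReal.toReal_mono hK.ne (ker_partial_le a _ N)
        · rw [abs_mul, abs_mul]
          exact mul_le_mul (hth k p.1) (hth k p.2) (abs_nonneg _) (abs_nonneg _)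
        · exact abs_nonneg _
        · exact ENNReal.toReal_nonneg
      · rw [hSNdef, Real.norm_eq_abs]
        simp only [httzero k p h0, mul_zero, abs_zero]
        exact hGnn p
    have hlim : ∀ᵐ p ∂μ, Filter.Tendsto (fun N => SN N p) atTop
        (nhds ((Kf p).toReal * (trunc k p.1 * trunc k p.2))) := by
      filter_upwards [hae] with p hp
      rcases hp with hK | h0
      · exact (ker_partial_tendsto a ha _ hK.ne).mul_const _
      · simp only [hSNdef, httzero k p h0, mul_zero]
        exact tendsto_const_nhds
    have hT := tendsto_integral_of_dominated_convergence G
      (fun N => (hSNM N).aestronglyMeasurable) hGint hdom hlim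
    exact le_of_tendsto_of_tendsto' tendsto_const_nhds hT hSN_nonneg
  -- Step 2: let the truncation level go to infinity
  set Fk : ℕ → Sph × Sph → ℝ := fun k p => (Kf p).toReal * (trunc k p.1 * trunc k p.2)
    with hFkdef
  have hFkM : ∀ k, Measurable (Fk k) := fun k =>
    hKfM.ennreal_toReal.mul (((htM k).comp measurable_fst).mul ((htM k).comp measurable_snd))
  have hdom2 : ∀ k, ∀ᵐ p ∂μ, ‖Fk k p‖ ≤ G p := by
    intro k
    refine ae_of_all _ fun p => ?_
    rw [Real.norm_eq_abs, hFkdef, abs_mul, abs_of_nonneg (ENNReal.toReal_nonneg :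
      (0:ℝ) ≤ (Kf p).toReal)]
    apply mul_le_mul_of_nonneg_left _ ENNReal.toReal_nonneg
    rw [abs_mul, abs_mul]
    exact mul_le_mul (hth k p.1) (hth k p.2) (abs_nonneg _) (abs_nonneg _)
  have hlim2 : ∀ᵐ p ∂μ, Filter.Tendsto (fun k => Fk k p) atTop
      (nhds ((Kf p).toReal * (h p.1 * h p.2))) := by
    refine ae_of_all _ fun p => ?_
    apply Filter.Tendsto.congr' _ tendsto_const_nhds
    filter_upwards [Filter.eventually_ge_atTop ⌈max |h p.1| |h p.2|⌉₊] with k hk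
    have hmax : max |h p.1| |h p.2| ≤ (k : ℝ) := Nat.ceil_le.mp hk
    have h1 : trunc k p.1 = h p.1 := if_pos (le_trans (le_max_left _ _) hmax)
    have h2 : trunc k p.2 = h p.2 := if_pos (le_trans (le_max_right _ _) hmax)
    simp only [hFkdef]
    rw [h1, h2]
  have hT := tendsto_integral_of_dominated_convergence G
    (fun k => (hFkM k).aestronglyMeasurable) hGint hdom2 hlim2
  exact le_of_tendsto_of_tendsto' tendsto_const_nhds hT Hk


end
end

section
/- (1) Let {f_n} ⊂ L¹(ℝ³) be relatively weakly compact in L¹(ℝ³) and let {g_n} ⊂ L^∞(ℝ³) satisfy sup_n ‖g_n‖_{L^∞} < ∞ and g_n(v) → 0 as n → ∞ for a.e. v ∈ ℝ³; then ‖f_n g_n‖_{L¹} → 0. (2) Let {f_n} ⊂ L¹(ℝ³) be relatively weakly compact in L¹(ℝ³) and let {g_n} ⊂ L¹(ℝ³) satisfy g_n ⇀ 0 weakly in L¹(ℝ³); then f_n ⊗ g_n ⇀ 0 and g_n ⊗ f_n ⇀ 0 weakly in L¹(ℝ³×ℝ³). (3) If f_n ⇀ f and g_n ⇀ g weakly in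 L¹(ℝ³), then f_n ⊗ g_n ⇀ f ⊗ g weakly in L¹(ℝ³×ℝ³). -/
open MeasureTheory Real Filter Set
open scoped InnerProductSpace ENNReal

noncomputable section

/-- `Fₙ ⇀ g` weakly in `L¹(ℝ³)`. -/
def WeakL1LimV (Fs : ℕ → V3 → ℝ) (g : V3 → ℝ) : Prop :=
  ∀ ψ : V3 → ℝ, Measurable ψ → (∃ M : ℝ, ∀ v, |ψ v| ≤ M) →
    Filter.Tendsto (fun n => ∫ v : V3, Fs n v * ψ v) Filter.atTop
      (nhds (∫ v : V3, g v * ψ v))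

/-- `Ψₙ ⇀ g` weakly in `L¹(ℝ³×ℝ³)`. -/
def WeakL1LimP (Fs : ℕ → V3 × V3 → ℝ) (g : V3 × V3 → ℝ) : Prop :=
  ∀ ψ : V3 × V3 → ℝ, Measurable ψ → (∃ M : ℝ, ∀ p, |ψ p| ≤ M) →
    Filter.Tendsto (fun n => ∫ p : V3 × V3, Fs n p * ψ p) Filter.atTop
      (nhds (∫ p : V3 × V3, g p * ψ p))

/-- The sequence `{fₙ}` is relatively weakly compact in `L¹(ℝ³)`: every subsequence
has a weakly convergent sub-subsequence. -/
def RelWeakCompactL1 (Fs : ℕ → V3 → ℝ) : Prop :=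
  ∀ φ : ℕ → ℕ, StrictMono φ → ∃ ψ : ℕ → ℕ, StrictMono ψ ∧ ∃ g : V3 → ℝ,
    Integrable g ∧ WeakL1LimV (fun k => Fs (φ (ψ k))) g

namespace WCPL

noncomputable def nu : Measure V3 := (exists_isFiniteMeasure_absolutelyContinuous (volume : Measure V3)).choose
instance : IsFiniteMeasure nu := (exists_isFiniteMeasure_absolutelyContinuous (volume : Measure V3)).choose_spec.1
lemma vol_ac_nu : (volume : Measure V3) ≪ nu := (exists_isFiniteMeasure_absolutelyContinuous (volume : Measure V3)).choose_spec.2.1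
lemma nu_ac_vol : nu ≪ (volume : Measure V3) := (exists_isFiniteMeasure_absolutelyContinuous (volume : Measure V3)).choose_spec.2.2

/-- ε-δ absolute continuity of the integral of |h| w.r.t. nu. -/
lemma absCont {h : V3 → ℝ} (hi : Integrable h) {ε : ℝ} (hε : 0 < ε) :
    ∃ δ : ℝ≥0∞, 0 < δ ∧ ∀ E : Set V3, MeasurableSet E → nu E ≤ δ →
      ∫ v in E, |h v| ≤ ε := by
  set κ : Measure V3 := (volume : Measure V3).withDensity (fun v => (‖h v‖₊ : ℝ≥0∞)) with hκ
  have hκvol : κ ≪ (volume : Measure V3) := withDensity_absolutelyContinuous _ _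
  have hκfin : κ univ < ∞ := by
    rw [hκ, withDensity_apply _ MeasurableSet.univ, Measure.restrict_univ]
    exact hi.hasFiniteIntegral
  -- reduce to κ
  have key : ∃ δ : ℝ≥0∞, 0 < δ ∧ ∀ E : Set V3, MeasurableSet E → nu E ≤ δ →
      κ E ≤ ENNReal.ofReal ε := by
    by_contra hcon
    push_neg at hcon
    have hch : ∀ j : ℕ, ∃ E : Set V3, MeasurableSet E ∧ nu E ≤ (2:ℝ≥0∞)⁻¹ ^ j ∧
        ENNReal.ofReal ε < κ E := by
      intro j
      obtain ⟨E, hE1, hE2, hE3⟩ := hcon ((2:ℝ≥0∞)⁻¹ ^ j)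
        (ENNReal.pow_pos (by norm_num) j)
      exact ⟨E, hE1, hE2, hE3⟩
    choose E hEm hEnu hEκ using hch
    set T : ℕ → Set V3 := fun j => ⋃ k, E (j + k) with hT
    have hTm : ∀ j, MeasurableSet (T j) := fun j => MeasurableSet.iUnion (fun k => hEm _)
    have hTanti : Antitone T := by
      intro i j hij
      refine iUnion_subset fun k => ?_
      have : j + k = i + (j + k - i) := by omega
      rw [this]
      exact subset_iUnion (fun k => E (i + k)) _
    have hTnu : ∀ j, nu (T j) ≤ (2:ℝ≥0∞)⁻¹ ^ j * 2 := by
      intro j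
      calc nu (T j) ≤ ∑' k, nu (E (j + k)) := measure_iUnion_le _
        _ ≤ ∑' k, (2:ℝ≥0∞)⁻¹ ^ (j + k) := ENNReal.tsum_le_tsum fun k => hEnu _
        _ = (2:ℝ≥0∞)⁻¹ ^ j * ∑' k, (2:ℝ≥0∞)⁻¹ ^ k := by
            simp_rw [pow_add]; rw [ENNReal.tsum_mul_left]
        _ = (2:ℝ≥0∞)⁻¹ ^ j * 2 := by rw [ENNReal.tsum_geometric]; norm_num
    have hInu : nu (⋂ j, T j) = 0 := by
      have h0 : Tendsto (fun j => (2:ℝ≥0∞)⁻¹ ^ j * 2) atTop (nhds 0) := by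
        have := ENNReal.Tendsto.mul_const
          (ENNReal.tendsto_pow_atTop_nhds_zero_of_lt_one (by norm_num : (2:ℝ≥0∞)⁻¹ < 1))
          (Or.inr (by norm_num : (2:ℝ≥0∞) ≠ ⊤))
        simpa using this
      have hle : ∀ j, nu (⋂ i, T i) ≤ (2:ℝ≥0∞)⁻¹ ^ j * 2 :=
        fun j => le_trans (measure_mono (iInter_subset _ j)) (hTnu j)
      have hle0 : nu (⋂ j, T j) ≤ 0 := le_of_tendsto_of_tendsto' tendsto_const_nhds h0 hle
      exact le_antisymm hle0 zero_le
    have hIκ : κ (⋂ j, T j) = 0 := hκvol (vol_ac_nu hInu)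
    have htend : Tendsto (fun j => κ (T j)) atTop (nhds (κ (⋂ j, T j))) := by
      refine tendsto_measure_iInter_atTop (fun j => (hTm j).nullMeasurableSet) hTanti ⟨0, ?_⟩
      exact (lt_of_le_of_lt (measure_mono (subset_univ _)) hκfin).ne
    rw [hIκ] at htend
    have hev : ∀ᶠ j in atTop, κ (T j) < ENNReal.ofReal ε := by
      refine htend.eventually_lt_const ?_
      simpa using ENNReal.ofReal_pos.2 hε
    obtain ⟨j, hj⟩ := hev.exists
    have : ENNReal.ofReal ε < κ (T j) :=
      lt_of_lt_of_le (hEκ j) (measure_mono (by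
        have : E (j + 0) ⊆ T j := subset_iUnion (fun k => E (j + k)) 0
        simpa using this))
    exact absurd hj (not_lt.2 this.le)
  obtain ⟨δ, hδ, hδ2⟩ := key
  refine ⟨δ, hδ, fun s hs hsδ => ?_⟩
  have hint : ∫ v in s, |h v| = (κ s).toReal := by
    rw [hκ, withDensity_apply _ hs]
    rw [integral_eq_lintegral_of_nonneg_ae (Eventually.of_forall fun v => abs_nonneg _)
      (hi.abs.aestronglyMeasurable.restrict)]
    congr 1
    apply lintegral_congr_ae
    filter_upwards with v
    rw [← Real.enorm_eq_ofReal (abs_nonneg _)]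
    simp; rfl
  rw [hint]
  calc (κ s).toReal ≤ (ENNReal.ofReal ε).toReal :=
        ENNReal.toReal_mono ENNReal.ofReal_ne_top (hδ2 s hs hsδ)
    _ = ε := ENNReal.toReal_ofReal hε.le

/-- Elements of `L¹(ν)` that are a.e. equal to an indicator function. -/
def IndSet : Set (Lp ℝ 1 nu) :=
  {f | ∃ A : Set V3, MeasurableSet A ∧ (f : V3 → ℝ) =ᵐ[nu] A.indicator (fun _ => (1:ℝ))}

lemma ind_sub_eq (A B : Set V3) (x : V3) :
    (‖A.indicator (fun _ => (1:ℝ)) x - B.indicator (fun _ => (1:ℝ)) x‖₊ : ℝ≥0∞)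
      = ((A \ B) ∪ (B \ A)).indicator (fun _ => (1:ℝ≥0∞)) x := by
  by_cases hA : x ∈ A <;> by_cases hB : x ∈ B <;>
    simp [Set.indicator_of_mem, Set.indicator_of_notMem, hA, hB, Set.indicator_apply]

lemma eLpNorm_ind_sub {A B : Set V3} (hA : MeasurableSet A) (hB : MeasurableSet B) :
    eLpNorm (A.indicator (fun _ => (1:ℝ)) - B.indicator (fun _ => (1:ℝ))) 1 nu
      = nu ((A \ B) ∪ (B \ A)) := by
  rw [eLpNorm_one_eq_lintegral_enorm]
  calc ∫⁻ x, (‖(A.indicator (fun _ => (1:ℝ)) - B.indicator (fun _ => (1:ℝ))) x‖₊ : ℝ≥0∞) ∂nu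
      = ∫⁻ x, ((A \ B) ∪ (B \ A)).indicator (fun _ => (1:ℝ≥0∞)) x ∂nu := by
        apply lintegral_congr; intro x; exact ind_sub_eq A B x
    _ = nu ((A \ B) ∪ (B \ A)) := by
        rw [lintegral_indicator ((hA.diff hB).union (hB.diff hA))]
        simp

lemma dist_eq_nu {f g : Lp ℝ 1 nu} {A B : Set V3} (hA : MeasurableSet A) (hB : MeasurableSet B)
    (hf : (f : V3 → ℝ) =ᵐ[nu] A.indicator (fun _ => (1:ℝ)))
    (hg : (g : V3 → ℝ) =ᵐ[nu] B.indicator (fun _ => (1:ℝ))) :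
    dist f g = (nu ((A \ B) ∪ (B \ A))).toReal := by
  rw [Lp.dist_def]
  congr 1
  refine Eq.trans (eLpNorm_congr_ae (EventuallyEq.sub hf hg)) ?_
  exact eLpNorm_ind_sub hA hB

set_option synthInstance.maxHeartbeats 1000000 in
lemma isClosed_indSet : IsClosed IndSet := by
  refine IsSeqClosed.isClosed ?_
  intro fs f hfs hf
  rw [Lp.tendsto_Lp_iff_tendsto_eLpNorm'] at hf
  have htm : TendstoInMeasure nu (fun j => (fs j : V3 → ℝ)) atTop (f : V3 → ℝ) :=
    tendstoInMeasure_of_tendsto_eLpNorm one_ne_zero (fun j => Lp.aestronglyMeasurable _)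
      (Lp.aestronglyMeasurable _) hf
  obtain ⟨ns, -, hae⟩ := htm.exists_seq_tendsto_ae
  choose A hAm hAe using fun j => hfs j
  have h01 : ∀ᵐ x ∂nu, (f : V3 → ℝ) x = 0 ∨ (f : V3 → ℝ) x = 1 := by
    have hall : ∀ᵐ x ∂nu, (∀ j, (fs (ns j) : V3 → ℝ) x
        = (A (ns j)).indicator (fun _ => (1:ℝ)) x)
        ∧ Tendsto (fun i => (fs (ns i) : V3 → ℝ) x) atTop (nhds ((f : V3 → ℝ) x)) :=
      (ae_all_iff.2 fun j => hAe (ns j)).and hae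
    filter_upwards [hall] with x hx
    obtain ⟨hx1, hx2⟩ := hx
    have hmem : ∀ j, (fs (ns j) : V3 → ℝ) x ∈ ({0,1} : Set ℝ) := by
      intro j; rw [hx1 j]; by_cases h : x ∈ A (ns j) <;> simp [Set.indicator_apply, h]
    have hcl : IsClosed ({0,1} : Set ℝ) := isClosed_singleton.union isClosed_singleton
    have := hcl.mem_of_tendsto hx2 (Eventually.of_forall hmem)
    simpa using this
  set m := (Lp.aestronglyMeasurable f).mk (f : V3 → ℝ) with hm
  refine ⟨m ⁻¹' {1},
    (Lp.aestronglyMeasurable f).stronglyMeasurable_mk.measurable (measurableSet_singleton 1), ?_⟩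
  filter_upwards [h01, (Lp.aestronglyMeasurable f).ae_eq_mk] with x hx hmx
  by_cases hmem : x ∈ m ⁻¹' {1}
  · rw [Set.indicator_of_mem hmem, hmx]; exact hmem
  · rw [Set.indicator_of_notMem hmem]
    rcases hx with h0 | h1
    · exact h0
    · refine absurd (show x ∈ m ⁻¹' {1} from ?_) hmem
      simp only [Set.mem_preimage, Set.mem_singleton_iff, hm]
      rw [← hmx]; exact h1


lemma integral_mul_indicator (h : V3 → ℝ) {E : Set V3} (hE : MeasurableSet E) :
    ∫ v, h v * E.indicator (fun _ => (1:ℝ)) v = ∫ v in E, h v := by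
  rw [← integral_indicator hE]
  congr 1; ext v; by_cases hv : v ∈ E <;> simp [hv]

lemma setwise_tendsto {h : ℕ → V3 → ℝ} {G : V3 → ℝ} (hw : WeakL1LimV h G)
    {E : Set V3} (hE : MeasurableSet E) :
    Tendsto (fun n => ∫ v in E, h n v) atTop (nhds (∫ v in E, G v)) := by
  have := hw (E.indicator fun _ => (1:ℝ)) (measurable_const.indicator hE)
    ⟨1, fun v => by by_cases hv : v ∈ E <;> simp [hv, Set.indicator_apply]⟩
  simpa only [integral_mul_indicator _ hE] using this

lemma abs_setInt_le {h : V3 → ℝ} (E : Set V3) :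
    |∫ v in E, h v| ≤ ∫ v in E, |h v| := by
  simpa [Real.norm_eq_abs] using
    norm_integral_le_integral_norm (μ := (volume : Measure V3).restrict E) (f := h)

lemma lam_eq {h : V3 → ℝ} {f : Lp ℝ 1 nu} {A : Set V3} (hA : MeasurableSet A)
    (hf : (f : V3 → ℝ) =ᵐ[nu] A.indicator (fun _ => (1:ℝ))) :
    ∫ v, h v * (f : V3 → ℝ) v = ∫ v in A, h v := by
  rw [← integral_mul_indicator h hA]
  apply integral_congr_ae
  filter_upwards [hf.filter_mono vol_ac_nu.ae_le] with v hv
  rw [hv]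

set_option maxHeartbeats 1000000 in
set_option synthInstance.maxHeartbeats 400000 in
lemma uac_signed {h : ℕ → V3 → ℝ} (hi : ∀ n, Integrable (h n)) {G : V3 → ℝ}
    (hG : Integrable G) (hw : WeakL1LimV h G) {ε : ℝ} (hε : 0 < ε) :
    ∃ δ : ℝ≥0∞, 0 < δ ∧ ∀ n, ∀ E : Set V3, MeasurableSet E → nu E ≤ δ →
      |∫ v in E, h n v| ≤ 4 * ε := by
  classical
  haveI : CompleteSpace IndSet := isClosed_indSet.completeSpace_coe
  set lam : ℕ → IndSet → ℝ := fun n f => ∫ v, h n v * ((f : Lp ℝ 1 nu) : V3 → ℝ) v with hlam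
  -- continuity of each lam n
  have hcont : ∀ n, Continuous (lam n) := by
    intro n
    rw [Metric.continuous_iff]
    intro f₀ ε' hε'
    obtain ⟨δ, hδ0, hδ⟩ := absCont (hi n) (half_pos hε')
    refine ⟨(min δ 1).toReal, ENNReal.toReal_pos (lt_min hδ0 one_pos).ne'
      ((min_le_right δ 1).trans_lt (by norm_num)).ne, ?_⟩
    intro f hdist
    obtain ⟨A, hA, hfA⟩ := f.2
    obtain ⟨A₀, hA₀, hfA₀⟩ := f₀.2
    rw [Subtype.dist_eq, dist_eq_nu hA hA₀ hfA hfA₀] at hdist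
    have hD : nu ((A \ A₀) ∪ (A₀ \ A)) ≤ δ := by
      have := (ENNReal.toReal_lt_toReal (measure_ne_top _ _)
        ((min_le_right δ 1).trans_lt (by norm_num)).ne).1 hdist
      exact le_trans this.le (min_le_left _ _)
    have e1 : ∫ v in A, h n v = (∫ v in A ∩ A₀, h n v) + ∫ v in A \ A₀, h n v :=
      (integral_inter_add_diff hA₀ ((hi n).integrableOn)).symm
    have e2 : ∫ v in A₀, h n v = (∫ v in A ∩ A₀, h n v) + ∫ v in A₀ \ A, h n v := by
      rw [Set.inter_comm]
      exact (integral_inter_add_diff hA ((hi n).integrableOn)).symm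
    have habs : |lam n f - lam n f₀| ≤ ∫ v in (A \ A₀) ∪ (A₀ \ A), |h n v| := by
      have hl1 : lam n f = ∫ v in A, h n v := lam_eq hA hfA
      have hl2 : lam n f₀ = ∫ v in A₀, h n v := lam_eq hA₀ hfA₀
      set a := ∫ v in A ∩ A₀, h n v with ha
      set b := ∫ v in A \ A₀, h n v with hbb
      set c := ∫ v in A₀ \ A, h n v with hcc
      rw [hl1, hl2, e1, e2]
      have hsum : ∫ v in (A \ A₀) ∪ (A₀ \ A), |h n v|
          = (∫ v in A \ A₀, |h n v|) + ∫ v in A₀ \ A, |h n v| :=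
        setIntegral_union disjoint_sdiff_sdiff (hA₀.diff hA)
          ((hi n).abs.integrableOn) ((hi n).abs.integrableOn)
      rw [hsum]
      have h1 : |b| ≤ ∫ v in A \ A₀, |h n v| := abs_setInt_le _
      have h2 : |c| ≤ ∫ v in A₀ \ A, |h n v| := abs_setInt_le _
      have hrw : a + b - (a + c) = b - c := by ring
      rw [hrw]
      exact le_trans (abs_sub b c) (add_le_add h1 h2)
    rw [Real.dist_eq]
    calc |lam n f - lam n f₀| ≤ ∫ v in (A \ A₀) ∪ (A₀ \ A), |h n v| := habs
      _ ≤ ε' / 2 := hδ _ ((hA.diff hA₀).union (hA₀.diff hA)) hD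
      _ < ε' := by linarith
  -- the closed pieces
  set F : ℕ → Set IndSet := fun N =>
    ⋂ (n) (m), {f : IndSet | N ≤ n → N ≤ m → |lam n f - lam m f| ≤ ε} with hF
  have hFclosed : ∀ N, IsClosed (F N) := by
    intro N
    refine isClosed_iInter fun n => isClosed_iInter fun m => ?_
    by_cases hn : N ≤ n
    · by_cases hm : N ≤ m
      · have hset : {f : IndSet | N ≤ n → N ≤ m → |lam n f - lam m f| ≤ ε}
            = (fun f => |lam n f - lam m f|) ⁻¹' (Iic ε) := by
          ext f; simp [hn, hm]
        rw [hset]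
        exact IsClosed.preimage (continuous_abs.comp ((hcont n).sub (hcont m))) isClosed_Iic
      · have hset : {f : IndSet | N ≤ n → N ≤ m → |lam n f - lam m f| ≤ ε} = univ := by
          ext f; simp [hm]
        rw [hset]; exact isClosed_univ
    · have hset : {f : IndSet | N ≤ n → N ≤ m → |lam n f - lam m f| ≤ ε} = univ := by
        ext f; simp [hn]
      rw [hset]; exact isClosed_univ
  have hFcover : ⋃ N, F N = univ := by
    rw [eq_univ_iff_forall]
    intro f
    obtain ⟨A, hA, hfA⟩ := f.2
    have htend : Tendsto (fun n => lam n f) atTop (nhds (∫ v in A, G v)) := by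
      have h1 : (fun n => lam n f) = fun n => ∫ v in A, h n v :=
        funext fun n => lam_eq hA hfA
      rw [h1]
      exact setwise_tendsto hw hA
    have hcauchy := htend.cauchySeq
    rw [Metric.cauchySeq_iff] at hcauchy
    obtain ⟨N, hN⟩ := hcauchy ε hε
    refine mem_iUnion.2 ⟨N, ?_⟩
    simp only [hF, mem_iInter, mem_setOf_eq]
    intro n m hn hm
    have := hN n hn m hm
    rw [Real.dist_eq] at this
    exact this.le
  haveI : Nonempty IndSet :=
    ⟨⟨indicatorConstLp 1 MeasurableSet.empty (by simp) (1:ℝ),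
      ∅, MeasurableSet.empty, indicatorConstLp_coeFn⟩⟩
  obtain ⟨N, hN⟩ := nonempty_interior_of_iUnion_of_closed hFclosed hFcover
  obtain ⟨f₀, hf₀⟩ := hN
  obtain ⟨r, hr0, hball⟩ := Metric.isOpen_iff.1 isOpen_interior f₀ hf₀
  have hball' : Metric.ball f₀ r ⊆ F N := hball.trans interior_subset
  obtain ⟨A₀, hA₀, hfA₀⟩ := f₀.2
  obtain ⟨δG, hδG0, hδG⟩ := absCont hG hε
  choose δs hδs0 hδs using fun k : ℕ => absCont (hi k) hε
  refine ⟨min (min (ENNReal.ofReal (r/2)) δG) ((Finset.range N).inf δs), ?_, ?_⟩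
  · refine lt_min (lt_min (ENNReal.ofReal_pos.2 (half_pos hr0)) hδG0) ?_
    exact (Finset.lt_inf_iff (by simp : (0:ℝ≥0∞) < ⊤)).2 fun k _ => hδs0 k
  intro n E hE hEδ
  by_cases hn : N ≤ n
  · have hEr : nu E ≤ ENNReal.ofReal (r/2) :=
      le_trans hEδ (le_trans (min_le_left _ _) (min_le_left _ _))
    have hEG : nu E ≤ δG := le_trans hEδ (le_trans (min_le_left _ _) (min_le_right _ _))
    set e₁ : Lp ℝ 1 nu := indicatorConstLp 1 (hA₀.union hE) (measure_ne_top _ _) (1:ℝ) with he₁d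
    set e₂ : Lp ℝ 1 nu := indicatorConstLp 1 (hA₀.diff hE) (measure_ne_top _ _) (1:ℝ) with he₂d
    have he₁ : (e₁ : V3 → ℝ) =ᵐ[nu] (A₀ ∪ E).indicator (fun _ => (1:ℝ)) := indicatorConstLp_coeFn
    have he₂ : (e₂ : V3 → ℝ) =ᵐ[nu] (A₀ \ E).indicator (fun _ => (1:ℝ)) := indicatorConstLp_coeFn
    have hdist1 : ((⟨e₁, ⟨A₀ ∪ E, hA₀.union hE, he₁⟩⟩ : IndSet)) ∈ Metric.ball f₀ r := by
      rw [Metric.mem_ball, Subtype.dist_eq, dist_eq_nu (hA₀.union hE) hA₀ he₁ hfA₀]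
      have hsub : ((A₀ ∪ E) \ A₀) ∪ (A₀ \ (A₀ ∪ E)) ⊆ E := by
        intro x hx
        rcases hx with hx | hx
        · rcases hx.1 with h₁ | h₁
          · exact absurd h₁ hx.2
          · exact h₁
        · exact absurd (Set.mem_union_left _ hx.1) hx.2
      have hle : nu (((A₀ ∪ E) \ A₀) ∪ (A₀ \ (A₀ ∪ E))) ≤ ENNReal.ofReal (r/2) :=
        le_trans (measure_mono hsub) hEr
      calc (nu (((A₀ ∪ E) \ A₀) ∪ (A₀ \ (A₀ ∪ E)))).toReal
          ≤ (ENNReal.ofReal (r/2)).toReal :=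
            ENNReal.toReal_mono ENNReal.ofReal_ne_top hle
        _ = r/2 := ENNReal.toReal_ofReal (by linarith)
        _ < r := by linarith
    have hdist2 : ((⟨e₂, ⟨A₀ \ E, hA₀.diff hE, he₂⟩⟩ : IndSet)) ∈ Metric.ball f₀ r := by
      rw [Metric.mem_ball, Subtype.dist_eq, dist_eq_nu (hA₀.diff hE) hA₀ he₂ hfA₀]
      have hsub : ((A₀ \ E) \ A₀) ∪ (A₀ \ (A₀ \ E)) ⊆ E := by
        intro x hx
        rcases hx with hx | hx
        · exact absurd hx.1.1 hx.2
        · by_contra hxE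
          exact hx.2 ⟨hx.1, hxE⟩
      have hle : nu (((A₀ \ E) \ A₀) ∪ (A₀ \ (A₀ \ E))) ≤ ENNReal.ofReal (r/2) :=
        le_trans (measure_mono hsub) hEr
      calc (nu (((A₀ \ E) \ A₀) ∪ (A₀ \ (A₀ \ E)))).toReal
          ≤ (ENNReal.ofReal (r/2)).toReal :=
            ENNReal.toReal_mono ENNReal.ofReal_ne_top hle
        _ = r/2 := ENNReal.toReal_ofReal (by linarith)
        _ < r := by linarith
    have hFN1 := hball' hdist1
    have hFN2 := hball' hdist2
    simp only [hF, mem_iInter, mem_setOf_eq] at hFN1 hFN2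
    have hsplit : ∀ k, ∫ v in A₀ ∪ E, h k v = (∫ v in A₀ \ E, h k v) + ∫ v in E, h k v := by
      intro k
      rw [← Set.diff_union_self]
      exact setIntegral_union disjoint_sdiff_left hE ((hi k).integrableOn) ((hi k).integrableOn)
    have hkey : ∀ k, ∫ v in E, h k v
        = lam k ⟨e₁, ⟨A₀ ∪ E, hA₀.union hE, he₁⟩⟩ - lam k ⟨e₂, ⟨A₀ \ E, hA₀.diff hE, he₂⟩⟩ := by
      intro k
      have h1 : lam k ⟨e₁, ⟨A₀ ∪ E, hA₀.union hE, he₁⟩⟩ = ∫ v in A₀ ∪ E, h k v :=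
        lam_eq (hA₀.union hE) he₁
      have h2 : lam k ⟨e₂, ⟨A₀ \ E, hA₀.diff hE, he₂⟩⟩ = ∫ v in A₀ \ E, h k v :=
        lam_eq (hA₀.diff hE) he₂
      rw [h1, h2, hsplit k]; ring
    have hpair : ∀ m, N ≤ m → |(∫ v in E, h n v) - ∫ v in E, h m v| ≤ 2 * ε := by
      intro m hm
      rw [hkey n, hkey m]
      have b1 := hFN1 n m hn hm
      have b2 := hFN2 n m hn hm
      set p := lam n ⟨e₁, ⟨A₀ ∪ E, hA₀.union hE, he₁⟩⟩ with hp
      set p' := lam m ⟨e₁, ⟨A₀ ∪ E, hA₀.union hE, he₁⟩⟩ with hp'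
      set q := lam n ⟨e₂, ⟨A₀ \ E, hA₀.diff hE, he₂⟩⟩ with hq
      set q' := lam m ⟨e₂, ⟨A₀ \ E, hA₀.diff hE, he₂⟩⟩ with hq'
      have hrw : p - q - (p' - q') = (p - p') - (q - q') := by ring
      rw [hrw]
      exact le_trans (abs_sub _ _) (by linarith)
    have hlimE := setwise_tendsto hw hE
    have hlim2 : Tendsto (fun m => |(∫ v in E, h n v) - ∫ v in E, h m v|) atTop
        (nhds |(∫ v in E, h n v) - ∫ v in E, G v|) :=
      (tendsto_const_nhds.sub hlimE).abs
    have hfinal : |(∫ v in E, h n v) - ∫ v in E, G v| ≤ 2 * ε :=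
      le_of_tendsto hlim2 (eventually_atTop.2 ⟨N, fun m hm => hpair m hm⟩)
    have hGE : |∫ v in E, G v| ≤ ε :=
      le_trans (abs_setInt_le E) (hδG E hE hEG)
    have h4 : |∫ v in E, h n v| ≤ |(∫ v in E, h n v) - ∫ v in E, G v| + |∫ v in E, G v| := by
      have := abs_add_le ((∫ v in E, h n v) - ∫ v in E, G v) (∫ v in E, G v)
      simpa using this
    linarith
  · have hEn : nu E ≤ δs n :=
      le_trans hEδ (le_trans (min_le_right _ _) (Finset.inf_le (Finset.mem_range.2 (not_le.1 hn))))
    calc |∫ v in E, h n v| ≤ ∫ v in E, |h n v| := abs_setInt_le E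
      _ ≤ ε := hδs n E hE hEn
      _ ≤ 4 * ε := by linarith

lemma uac_abs {h : ℕ → V3 → ℝ} (hi : ∀ n, Integrable (h n)) {G : V3 → ℝ}
    (hG : Integrable G) (hw : WeakL1LimV h G) {ε : ℝ} (hε : 0 < ε) :
    ∃ δ : ℝ≥0∞, 0 < δ ∧ ∀ n, ∀ E : Set V3, MeasurableSet E → nu E ≤ δ →
      ∫ v in E, |h n v| ≤ ε := by
  have hε8 : 0 < ε/8 := by linarith
  obtain ⟨δ, hδ0, hδ⟩ := uac_signed hi hG hw hε8
  refine ⟨δ, hδ0, ?_⟩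
  intro n E hE hEδ
  set m := (hi n).1.mk (h n) with hm
  set P := {v : V3 | 0 ≤ m v} with hP
  have hPm : MeasurableSet P :=
    measurableSet_le measurable_const (hi n).1.stronglyMeasurable_mk.measurable
  have hsum : ∫ v in E, |h n v| = (∫ v in E ∩ P, |h n v|) + ∫ v in E \ P, |h n v| :=
    (integral_inter_add_diff hPm ((hi n).abs.integrableOn)).symm
  have h1 : ∫ v in E ∩ P, |h n v| = ∫ v in E ∩ P, h n v := by
    refine setIntegral_congr_ae (hE.inter hPm) ?_
    filter_upwards [(hi n).1.ae_eq_mk] with v hv hvEP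
    rw [abs_of_nonneg]
    rw [hv]; exact hvEP.2
  have h2 : ∫ v in E \ P, |h n v| = - ∫ v in E \ P, h n v := by
    rw [← integral_neg]
    refine setIntegral_congr_ae (hE.diff hPm) ?_
    filter_upwards [(hi n).1.ae_eq_mk] with v hv hvEP
    rw [abs_of_neg]
    rw [hv]; exact lt_of_not_ge hvEP.2
  have b1 : |∫ v in E ∩ P, h n v| ≤ 4 * (ε/8) :=
    hδ n _ (hE.inter hPm) (le_trans (measure_mono Set.inter_subset_left) hEδ)
  have b2 : |∫ v in E \ P, h n v| ≤ 4 * (ε/8) :=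
    hδ n _ (hE.diff hPm) (le_trans (measure_mono Set.diff_subset) hEδ)
  rw [hsum, h1, h2]
  have := abs_le.1 b1
  have := abs_le.1 b2
  linarith [this.1, this.2]

lemma linfty_ae_bound (ψ : Lp ℝ ⊤ (volume : Measure V3)) :
    ∀ᵐ v, |(ψ : V3 → ℝ) v| ≤ ‖ψ‖ := by
  have h1 := ae_le_eLpNormEssSup (f := (ψ : V3 → ℝ)) (μ := (volume : Measure V3))
  have hfin : eLpNormEssSup (ψ : V3 → ℝ) volume ≠ ⊤ := by
    rw [← eLpNorm_exponent_top]; exact Lp.eLpNorm_ne_top ψ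
  filter_upwards [h1] with v hv
  have : ((‖(ψ : V3 → ℝ) v‖₊ : ℝ≥0∞)).toReal ≤ (eLpNormEssSup (ψ : V3 → ℝ) volume).toReal :=
    ENNReal.toReal_mono hfin hv
  simpa [Lp.norm_def, eLpNorm_exponent_top, Real.norm_eq_abs] using this

lemma integrable_mul_linfty {h : V3 → ℝ} (hi : Integrable h)
    (ψ : Lp ℝ ⊤ (volume : Measure V3)) :
    Integrable (fun v => h v * (ψ : V3 → ℝ) v) := by
  have := hi.bdd_mul (Lp.aestronglyMeasurable ψ)
    (by filter_upwards [linfty_ae_bound ψ] with v hv; simpa [Real.norm_eq_abs] using hv)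
  apply this.congr
  filter_upwards with v
  ring

noncomputable def Tn (h : V3 → ℝ) (hi : Integrable h) :
    Lp ℝ ⊤ (volume : Measure V3) →L[ℝ] ℝ :=
  LinearMap.mkContinuous
    { toFun := fun ψ => ∫ v, h v * (ψ : V3 → ℝ) v
      map_add' := by
        intro ψ φ
        have hcongr : ∫ v, h v * ((ψ + φ : Lp ℝ ⊤ _) : V3 → ℝ) v
            = ∫ v, (h v * (ψ : V3 → ℝ) v + h v * (φ : V3 → ℝ) v) := by
          refine integral_congr_ae ?_
          filter_upwards [Lp.coeFn_add ψ φ] with v hv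
          rw [hv]; simp; ring
        rw [hcongr, integral_add (integrable_mul_linfty hi ψ) (integrable_mul_linfty hi φ)]
      map_smul' := by
        intro c ψ
        have hcongr : ∫ v, h v * ((c • ψ : Lp ℝ ⊤ _) : V3 → ℝ) v
            = ∫ v, c * (h v * (ψ : V3 → ℝ) v) := by
          refine integral_congr_ae ?_
          filter_upwards [Lp.coeFn_smul c ψ] with v hv
          rw [hv]; simp; ring
        rw [hcongr, integral_const_mul]
        simp }
    (∫ v, |h v|)
    (by
      intro ψ
      simp only [LinearMap.coe_mk, AddHom.coe_mk]
      have hb : ‖∫ v, h v * (ψ : V3 → ℝ) v‖ ≤ ∫ v, |h v| * ‖ψ‖ := by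
        refine norm_integral_le_of_norm_le (hi.abs.mul_const _) ?_
        filter_upwards [linfty_ae_bound ψ] with v hv
        rw [Real.norm_eq_abs, abs_mul]
        exact mul_le_mul_of_nonneg_left hv (abs_nonneg _)
      rw [integral_mul_const] at hb
      exact hb)

lemma weak_bdd {h : ℕ → V3 → ℝ} (hi : ∀ n, Integrable (h n)) {G : V3 → ℝ}
    (hG : Integrable G) (hw : WeakL1LimV h G) :
    ∃ C : ℝ, ∀ n, ∫ v, |h n v| ≤ C := by
  classical
  have hpt : ∀ ψ : Lp ℝ ⊤ (volume : Measure V3), ∃ C, ∀ n, ‖Tn (h n) (hi n) ψ‖ ≤ C := by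
    intro ψ
    set m := (Lp.aestronglyMeasurable ψ).mk (ψ : V3 → ℝ) with hmdef
    set C := ‖ψ‖ with hC
    have hC0 : 0 ≤ C := norm_nonneg _
    set g : V3 → ℝ := fun v => max (min (m v) C) (-C) with hg
    have hgm : Measurable g :=
      (((Lp.aestronglyMeasurable ψ).stronglyMeasurable_mk.measurable.min
        measurable_const).max measurable_const)
    have hgb : ∀ v, |g v| ≤ C := by
      intro v
      rw [abs_le]
      constructor
      · exact le_max_right _ _
      · exact max_le (le_trans (min_le_right _ _) le_rfl) (by linarith)
    have hgae : (fun v => g v) =ᵐ[volume] (ψ : V3 → ℝ) := by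
      filter_upwards [(Lp.aestronglyMeasurable ψ).ae_eq_mk, linfty_ae_bound ψ] with v h1 h2
      have h3 := abs_le.1 h2
      have h1' : (ψ : V3 → ℝ) v = m v := h1
      show max (min (m v) C) (-C) = (ψ : V3 → ℝ) v
      rw [← h1', min_eq_left (by rw [hC]; exact h3.2), max_eq_left (by rw [hC]; exact h3.1)]
    have hval : ∀ n, Tn (h n) (hi n) ψ = ∫ v, h n v * g v := by
      intro n
      refine integral_congr_ae ?_
      filter_upwards [hgae] with v hv
      rw [hv]
    have hconv : Tendsto (fun n => ∫ v, h n v * g v) atTop (nhds (∫ v, G v * g v)) :=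
      hw g hgm ⟨C, hgb⟩
    have hbdd : BddAbove (Set.range fun n => |∫ v, h n v * g v|) :=
      (hconv.abs).bddAbove_range
    obtain ⟨C₀, hC₀⟩ := hbdd
    refine ⟨C₀, fun n => ?_⟩
    rw [hval n, Real.norm_eq_abs]
    exact hC₀ (Set.mem_range_self n)
  obtain ⟨C', hC'⟩ := banach_steinhaus hpt
  refine ⟨C', fun n => ?_⟩
  set m := (hi n).1.mk (h n) with hmdef
  set s : V3 → ℝ := fun v => if 0 ≤ m v then 1 else -1 with hs
  have hsm : Measurable s :=
    Measurable.ite (measurableSet_le measurable_const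
      (hi n).1.stronglyMeasurable_mk.measurable) measurable_const measurable_const
  have hsb : ∀ᵐ v : V3, ‖s v‖ ≤ 1 := by
    filter_upwards with v
    rw [hs]; simp only
    by_cases hv : 0 ≤ m v <;> simp [hv]
  have hmem : MemLp s ⊤ (volume : Measure V3) :=
    memLp_top_of_bound hsm.aestronglyMeasurable 1 hsb
  have hσnorm : ‖hmem.toLp s‖ ≤ 1 := by
    rw [Lp.norm_toLp]
    have := eLpNorm_le_of_ae_bound (p := (⊤ : ℝ≥0∞)) (μ := (volume : Measure V3)) hsb
    calc (eLpNorm s ⊤ (volume : Measure V3)).toReal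
        ≤ ((volume : Measure V3) univ ^ (⊤ : ℝ≥0∞).toReal⁻¹ * ENNReal.ofReal 1).toReal :=
          ENNReal.toReal_mono (by simp) this
      _ = 1 := by simp
  have hTval : Tn (h n) (hi n) (hmem.toLp s) = ∫ v, |h n v| := by
    have h1 : Tn (h n) (hi n) (hmem.toLp s) = ∫ v, h n v * s v := by
      refine integral_congr_ae ?_
      filter_upwards [hmem.coeFn_toLp] with v hv
      rw [hv]
    rw [h1]
    refine integral_congr_ae ?_
    filter_upwards [(hi n).1.ae_eq_mk] with v hv
    rw [hs]; simp only
    by_cases hm : 0 ≤ m v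
    · simp only [hm, if_true, mul_one]
      rw [abs_of_nonneg (by rw [hv]; exact hm)]
    · simp only [hm, if_false, mul_neg_one]
      rw [abs_of_neg (by rw [hv]; exact lt_of_not_ge hm)]
  calc ∫ v, |h n v| = Tn (h n) (hi n) (hmem.toLp s) := hTval.symm
    _ ≤ |Tn (h n) (hi n) (hmem.toLp s)| := le_abs_self _
    _ ≤ ‖Tn (h n) (hi n)‖ * ‖hmem.toLp s‖ := by
        rw [← Real.norm_eq_abs]; exact (Tn (h n) (hi n)).le_opNorm _
    _ ≤ C' * 1 := mul_le_mul (hC' n) hσnorm (norm_nonneg _) ((norm_nonneg _).trans (hC' n))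
    _ = C' := mul_one C'

set_option maxHeartbeats 1000000 in
lemma prod_tendsto_zero {h : ℕ → V3 → ℝ} (hi : ∀ n, Integrable (h n)) {G : V3 → ℝ}
    (hG : Integrable G) (hw : WeakL1LimV h G) {g : ℕ → V3 → ℝ} {M : ℝ}
    (hgm : ∀ n, AEStronglyMeasurable (g n) (volume : Measure V3))
    (hgb : ∀ n, ∀ᵐ v : V3, |g n v| ≤ M)
    (hgz : ∀ᵐ v : V3, Tendsto (fun n => g n v) atTop (nhds 0)) :
    Tendsto (fun n => ∫ v, |h n v| * |g n v|) atTop (nhds 0) := by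
  have hM0 : 0 ≤ M := by
    obtain ⟨v, hv⟩ := (hgb 0).exists
    exact le_trans (abs_nonneg _) hv
  obtain ⟨C, hC⟩ := weak_bdd hi hG hw
  have hC0 : 0 ≤ C := le_trans (integral_nonneg fun v => abs_nonneg _) (hC 0)
  have hint : ∀ n, Integrable (fun v => |h n v| * |g n v|) := by
    intro n
    have h1 : Integrable (fun v => |g n v| * |h n v|) :=
      (hi n).abs.bdd_mul ((hgm n).norm)
        (by filter_upwards [hgb n] with v hv; simpa [Real.norm_eq_abs, abs_abs] using hv)
    exact h1.congr (Eventually.of_forall fun v => mul_comm _ _)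
  rw [NormedAddCommGroup.tendsto_nhds_zero]
  intro ε hε
  set ε₁ := ε/(2*(C+1)) with hε₁
  set ε₂ := ε/(2*(M+1)) with hε₂
  have hε₁0 : 0 < ε₁ := by positivity
  have hε₂0 : 0 < ε₂ := by positivity
  obtain ⟨δ, hδ0, hδ⟩ := uac_abs hi hG hw hε₂0
  -- convergence in nu-measure of the measurable versions
  set g' : ℕ → V3 → ℝ := fun n => (hgm n).mk (g n) with hg'
  have hg'm : ∀ n, Measurable (g' n) := fun n => (hgm n).stronglyMeasurable_mk.measurable
  have hg'z : ∀ᵐ v ∂nu, Tendsto (fun n => g' n v) atTop (nhds 0) := by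
    refine nu_ac_vol.ae_le ?_
    filter_upwards [hgz, ae_all_iff.2 fun n => (hgm n).ae_eq_mk] with v hv hv2
    refine hv.congr fun n => ?_
    exact hv2 n
  have htm : TendstoInMeasure nu g' atTop (fun _ => (0:ℝ)) :=
    tendstoInMeasure_of_tendsto_ae (fun n => (hg'm n).aestronglyMeasurable) hg'z
  have hsmall := (htm (ENNReal.ofReal ε₁) (ENNReal.ofReal_pos.2 hε₁0)).eventually_lt_const hδ0
  filter_upwards [hsmall] with n hn
  set E : Set V3 := {x | ENNReal.ofReal ε₁ ≤ edist (g' n x) 0} with hE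
  have hEm : MeasurableSet E :=
    measurableSet_le measurable_const ((hg'm n).edist measurable_const)
  have hEδ : nu E ≤ δ := hn.le
  have hsplit : ∫ v, |h n v| * |g n v|
      = (∫ v in E, |h n v| * |g n v|) + ∫ v in Eᶜ, |h n v| * |g n v| :=
    (integral_add_compl hEm (hint n)).symm
  have hb1 : ∫ v in E, |h n v| * |g n v| ≤ M * ε₂ := by
    have h1 : ∫ v in E, |h n v| * |g n v| ≤ ∫ v in E, |h n v| * M := by
      refine integral_mono_ae ((hint n).integrableOn) (((hi n).abs.mul_const M).integrableOn) ?_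
      refine ae_restrict_of_ae ?_
      filter_upwards [hgb n] with v hv
      exact mul_le_mul_of_nonneg_left hv (abs_nonneg _)
    have h2 : ∫ v in E, |h n v| * M = M * ∫ v in E, |h n v| := by
      rw [integral_mul_const]; ring
    have h3 : ∫ v in E, |h n v| ≤ ε₂ := hδ n E hEm hEδ
    calc ∫ v in E, |h n v| * |g n v| ≤ ∫ v in E, |h n v| * M := h1
      _ = M * ∫ v in E, |h n v| := h2
      _ ≤ M * ε₂ := mul_le_mul_of_nonneg_left h3 hM0
  have hb2 : ∫ v in Eᶜ, |h n v| * |g n v| ≤ ε₁ * C := by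
    have h1 : ∫ v in Eᶜ, |h n v| * |g n v| ≤ ∫ v in Eᶜ, |h n v| * ε₁ := by
      refine integral_mono_ae ((hint n).integrableOn) (((hi n).abs.mul_const ε₁).integrableOn) ?_
      refine (ae_restrict_iff' hEm.compl).2 ?_
      filter_upwards [(hgm n).ae_eq_mk] with v hv hvE
      have : dist (g' n v) 0 < ε₁ := edist_lt_ofReal.1 (lt_of_not_ge hvE)
      rw [Real.dist_eq, sub_zero] at this
      refine mul_le_mul_of_nonneg_left ?_ (abs_nonneg _)
      rw [hv]
      exact this.le
    have h2 : ∫ v in Eᶜ, |h n v| * ε₁ = ε₁ * ∫ v in Eᶜ, |h n v| := by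
      rw [integral_mul_const]; ring
    have h3 : ∫ v in Eᶜ, |h n v| ≤ C := by
      refine le_trans (setIntegral_le_integral (hi n).abs ?_) (hC n)
      filter_upwards with v; exact abs_nonneg _
    calc ∫ v in Eᶜ, |h n v| * |g n v| ≤ ∫ v in Eᶜ, |h n v| * ε₁ := h1
      _ = ε₁ * ∫ v in Eᶜ, |h n v| := h2
      _ ≤ ε₁ * C := mul_le_mul_of_nonneg_left h3 hε₁0.le
  have hnn : 0 ≤ ∫ v, |h n v| * |g n v| :=
    integral_nonneg fun v => mul_nonneg (abs_nonneg _) (abs_nonneg _)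
  rw [Real.norm_eq_abs, abs_of_nonneg hnn, hsplit]
  have e1 : ε₂ * (M + 1) = ε / 2 := by
    rw [hε₂]; field_simp
  have e2 : ε₁ * (C + 1) = ε / 2 := by
    rw [hε₁]; field_simp
  have hkey1 : M * ε₂ < ε / 2 := by
    calc M * ε₂ = ε₂ * M := mul_comm _ _
      _ < ε₂ * (M + 1) := mul_lt_mul_of_pos_left (by linarith) hε₂0
      _ = ε / 2 := e1
  have hkey2 : ε₁ * C < ε / 2 := by
    calc ε₁ * C < ε₁ * (C + 1) := mul_lt_mul_of_pos_left (by linarith) hε₁0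
      _ = ε / 2 := e2
  linarith


lemma rwc_of_weak {fs : ℕ → V3 → ℝ} {f : V3 → ℝ} (hf : Integrable f)
    (hw : WeakL1LimV fs f) : RelWeakCompactL1 fs := by
  intro φ hφ
  exact ⟨id, strictMono_id, f, hf, fun χ hm hb => (hw χ hm hb).comp hφ.tendsto_atTop⟩

lemma integrable_mul_bdd {F : V3 → ℝ} (hF : Integrable F) {χ : V3 → ℝ}
    (hχ : Measurable χ) {Mχ : ℝ} (hb : ∀ v, |χ v| ≤ Mχ) :
    Integrable (fun v => F v * χ v) :=
  (hF.bdd_mul hχ.aestronglyMeasurable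
    (Eventually.of_forall fun v => by simpa [Real.norm_eq_abs] using hb v)).congr
    (Eventually.of_forall fun v => mul_comm _ _)

lemma fubini_step {F g : V3 → ℝ} (hF : Integrable F) (hg : Integrable g)
    {ψ : V3 × V3 → ℝ} (hψ : Measurable ψ) {M : ℝ} (hψb : ∀ p, |ψ p| ≤ M) :
    ∫ p : V3 × V3, F p.1 * g p.2 * ψ p = ∫ v, F v * ∫ w, g w * ψ (v, w) := by
  have hint : Integrable (fun p : V3 × V3 => F p.1 * g p.2 * ψ p)
      ((volume : Measure V3).prod volume) := by
    refine ((hF.mul_prod hg).bdd_mul (c := M) hψ.aestronglyMeasurable ?_).congr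
      (Eventually.of_forall fun p => mul_comm _ _)
    exact Eventually.of_forall fun p => by simpa [Real.norm_eq_abs] using hψb p
  rw [Measure.volume_eq_prod, integral_prod _ hint]
  congr 1
  funext v
  simp_rw [mul_assoc]
  exact integral_const_mul _ _

lemma integrable_tensor_test {F G' : V3 → ℝ} (hF : Integrable F) (hG : Integrable G')
    {ψ : V3 × V3 → ℝ} (hψ : Measurable ψ) {M : ℝ} (hψb : ∀ p, |ψ p| ≤ M) :
    Integrable (fun p : V3 × V3 => F p.1 * G' p.2 * ψ p) (volume : Measure (V3 × V3)) := by
  rw [Measure.volume_eq_prod]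
  refine ((hF.mul_prod hG).bdd_mul (c := M) hψ.aestronglyMeasurable ?_).congr
    (Eventually.of_forall fun p => mul_comm _ _)
  exact Eventually.of_forall fun p => by simpa [Real.norm_eq_abs] using hψb p

set_option maxHeartbeats 800000 in
lemma tensor_weak_null_aux {f g : ℕ → V3 → ℝ}
    (hfi : ∀ n, Integrable (f n)) (hfc : RelWeakCompactL1 f)
    (hgi : ∀ n, Integrable (g n)) (hgw : WeakL1LimV g 0)
    {ψ : V3 × V3 → ℝ} (hψ : Measurable ψ) {M : ℝ} (hψb : ∀ p, |ψ p| ≤ M) :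
    Tendsto (fun n => ∫ p : V3 × V3, f n p.1 * g n p.2 * ψ p) atTop (nhds 0) := by
  have hM0 : 0 ≤ M := le_trans (abs_nonneg _) (hψb default)
  obtain ⟨Cg, hCg⟩ := weak_bdd hgi (integrable_zero _ _ _) hgw
  have hCg0 : 0 ≤ Cg := le_trans (integral_nonneg fun v => abs_nonneg _) (hCg 0)
  set H : ℕ → V3 → ℝ := fun n v => ∫ w, g n w * ψ (v, w) with hH
  have hHb : ∀ n v, |H n v| ≤ M * Cg := by
    intro n v
    have h1 : ‖∫ w, g n w * ψ (v, w)‖ ≤ ∫ w, |g n w| * M := by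
      refine norm_integral_le_of_norm_le ((hgi n).abs.mul_const M) ?_
      filter_upwards with w
      rw [Real.norm_eq_abs, abs_mul]
      exact mul_le_mul_of_nonneg_left (hψb (v, w)) (abs_nonneg _)
    rw [Real.norm_eq_abs] at h1
    calc |H n v| ≤ ∫ w, |g n w| * M := h1
      _ = (∫ w, |g n w|) * M := integral_mul_const _ _
      _ ≤ Cg * M := mul_le_mul_of_nonneg_right (hCg n) hM0
      _ = M * Cg := mul_comm _ _
  have hHm : ∀ n, AEStronglyMeasurable (H n) (volume : Measure V3) := by
    intro n
    have h1 : AEStronglyMeasurable (fun p : V3 × V3 => g n p.2 * ψ p)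
        ((volume : Measure V3).prod volume) :=
      ((hgi n).1.comp_snd).mul hψ.aestronglyMeasurable
    exact h1.integral_prod_right'
  have hHz : ∀ v, Tendsto (fun n => H n v) atTop (nhds 0) := by
    intro v
    have := hgw (fun w => ψ (v, w)) (hψ.comp measurable_prodMk_left) ⟨M, fun w => hψb (v, w)⟩
    simpa using this
  have hT : ∀ n, ∫ p : V3 × V3, f n p.1 * g n p.2 * ψ p = ∫ v, f n v * H n v :=
    fun n => fubini_step (hfi n) (hgi n) hψ hψb
  refine tendsto_of_subseq_tendsto fun ns hns => ?_
  obtain ⟨ms, hms, hcomp⟩ := strictMono_subseq_of_tendsto_atTop hns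
  obtain ⟨ks, hks, G, hGint, hwsub⟩ := hfc (ns ∘ ms) hcomp
  refine ⟨fun k => ms (ks k), ?_⟩
  have hidx : Tendsto (fun k => ns (ms (ks k))) atTop atTop := (hcomp.comp hks).tendsto_atTop
  have hmain : Tendsto (fun k => ∫ v, |f (ns (ms (ks k))) v| * |H (ns (ms (ks k))) v|)
      atTop (nhds 0) := by
    refine prod_tendsto_zero (fun k => hfi _) hGint hwsub (fun k => hHm _)
      (fun k => Eventually.of_forall fun v => hHb _ v) ?_
    exact Eventually.of_forall fun v => (hHz v).comp hidx
  refine squeeze_zero_norm (fun k => ?_) hmain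
  rw [hT, Real.norm_eq_abs]
  calc |∫ v, f (ns (ms (ks k))) v * H (ns (ms (ks k))) v|
      ≤ ∫ v, |f (ns (ms (ks k))) v * H (ns (ms (ks k))) v| := by
        simpa only [Real.norm_eq_abs] using norm_integral_le_integral_norm
          (μ := (volume : Measure V3)) (f := fun v => f (ns (ms (ks k))) v * H (ns (ms (ks k))) v)
    _ = ∫ v, |f (ns (ms (ks k))) v| * |H (ns (ms (ks k))) v| := by
        simp only [abs_mul]

lemma part1 (f g : ℕ → V3 → ℝ) (hfi : ∀ n, Integrable (f n)) (hfc : RelWeakCompactL1 f)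
    (hgm : ∀ n, Measurable (g n)) (hgb : ∃ M : ℝ, ∀ n, ∀ v, |g n v| ≤ M)
    (hgz : ∀ᵐ v : V3, Tendsto (fun n => g n v) atTop (nhds 0)) :
    Tendsto (fun n => ∫ v : V3, |f n v * g n v|) atTop (nhds 0) := by
  obtain ⟨M, hM⟩ := hgb
  refine tendsto_of_subseq_tendsto fun ns hns => ?_
  obtain ⟨ms, hms, hcomp⟩ := strictMono_subseq_of_tendsto_atTop hns
  obtain ⟨ks, hks, G, hGint, hwsub⟩ := hfc (ns ∘ ms) hcomp
  refine ⟨fun k => ms (ks k), ?_⟩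
  have hidx : Tendsto (fun k => ns (ms (ks k))) atTop atTop := (hcomp.comp hks).tendsto_atTop
  have hmain := prod_tendsto_zero (fun k => hfi _) hGint hwsub
    (fun k => (hgm _).aestronglyMeasurable)
    (fun k => Eventually.of_forall fun v => hM _ v)
    (by filter_upwards [hgz] with v hv; exact hv.comp hidx)
  refine hmain.congr fun k => ?_
  exact integral_congr_ae (Eventually.of_forall fun v => (abs_mul _ _).symm)

lemma part2 (f g : ℕ → V3 → ℝ) (hfi : ∀ n, Integrable (f n)) (hfc : RelWeakCompactL1 f)
    (hgi : ∀ n, Integrable (g n)) (hgw : WeakL1LimV g 0) :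
    WeakL1LimP (fun n p => f n p.1 * g n p.2) 0
      ∧ WeakL1LimP (fun n p => g n p.1 * f n p.2) 0 := by
  constructor
  · intro ψ hψm hψb
    obtain ⟨M, hb⟩ := hψb
    simp only [Pi.zero_apply, zero_mul, integral_zero]
    exact tensor_weak_null_aux hfi hfc hgi hgw hψm hb
  · intro ψ hψm hψb
    obtain ⟨M, hb⟩ := hψb
    simp only [Pi.zero_apply, zero_mul, integral_zero]
    have hψ' : Measurable fun p : V3 × V3 => ψ (p.2, p.1) :=
      hψm.comp (measurable_snd.prodMk measurable_fst)
    have hmain := tensor_weak_null_aux hfi hfc hgi hgw hψ'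
      (M := M) (fun p => hb (p.2, p.1))
    refine hmain.congr fun n => ?_
    simp only [Measure.volume_eq_prod]
    rw [← integral_prod_swap (fun p : V3 × V3 => g n p.1 * f n p.2 * ψ p)]
    congr 1
    funext z
    simp only [Prod.fst_swap, Prod.snd_swap, Prod.swap]
    ring
  
lemma part3 (fs gs : ℕ → V3 → ℝ) (f g : V3 → ℝ)
    (hfsi : ∀ n, Integrable (fs n)) (hgsi : ∀ n, Integrable (gs n))
    (hfi : Integrable f) (hgi : Integrable g)
    (hwf : WeakL1LimV fs f) (hwg : WeakL1LimV gs g) :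
    WeakL1LimP (fun n p => fs n p.1 * gs n p.2) (fun p => f p.1 * g p.2) := by
  intro ψ hψm hψb
  obtain ⟨M, hb⟩ := hψb
  have hRWC : RelWeakCompactL1 fs := rwc_of_weak hfi hwf
  have hgs' : ∀ n, Integrable (fun v => gs n v - g v) := fun n => (hgsi n).sub hgi
  have hwg0 : WeakL1LimV (fun n v => gs n v - g v) 0 := by
    intro χ hχm hχb
    obtain ⟨Mχ, hbχ⟩ := hχb
    have h1 := hwg χ hχm ⟨Mχ, hbχ⟩
    have heq : ∀ n, ∫ v, (gs n v - g v) * χ v = (∫ v, gs n v * χ v) - ∫ v, g v * χ v := by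
      intro n
      rw [← integral_sub (integrable_mul_bdd (hgsi n) hχm hbχ) (integrable_mul_bdd hgi hχm hbχ)]
      congr 1; funext v; ring
    have h2 : Tendsto (fun n => (∫ v, gs n v * χ v) - ∫ v, g v * χ v) atTop (nhds 0) := by
      have := h1.sub (tendsto_const_nhds (x := ∫ v, g v * χ v))
      simpa using this
    simp only [Pi.zero_apply, zero_mul, integral_zero]
    exact h2.congr fun n => (heq n).symm
  have hU := tensor_weak_null_aux hfsi hRWC hgs' hwg0 hψm hb
  set J : V3 → ℝ := fun v => ∫ w, g w * ψ (v, w) with hJ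
  set CJ : ℝ := M * ∫ w, |g w| with hCJ
  have hM0 : 0 ≤ M := le_trans (abs_nonneg _) (hb default)
  have hCJ0 : 0 ≤ CJ := mul_nonneg hM0 (integral_nonneg fun w => abs_nonneg _)
  have hJb : ∀ v, |J v| ≤ CJ := by
    intro v
    have h1 : ‖∫ w, g w * ψ (v, w)‖ ≤ ∫ w, |g w| * M := by
      refine norm_integral_le_of_norm_le (hgi.abs.mul_const M) ?_
      filter_upwards with w
      rw [Real.norm_eq_abs, abs_mul]
      exact mul_le_mul_of_nonneg_left (hb (v, w)) (abs_nonneg _)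
    rw [Real.norm_eq_abs] at h1
    calc |J v| ≤ ∫ w, |g w| * M := h1
      _ = (∫ w, |g w|) * M := integral_mul_const _ _
      _ = CJ := by rw [hCJ]; ring
  have hJm : AEStronglyMeasurable J (volume : Measure V3) := by
    have h1 : AEStronglyMeasurable (fun p : V3 × V3 => g p.2 * ψ p)
        ((volume : Measure V3).prod volume) := (hgi.1.comp_snd).mul hψm.aestronglyMeasurable
    exact h1.integral_prod_right'
  set mJ : V3 → ℝ := hJm.mk J with hmJ
  set J' : V3 → ℝ := fun v => max (min (mJ v) CJ) (-CJ) with hJ'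
  have hJ'm : Measurable J' :=
    (hJm.stronglyMeasurable_mk.measurable.min measurable_const).max measurable_const
  have hJ'b : ∀ v, |J' v| ≤ CJ := by
    intro v
    rw [abs_le]
    exact ⟨le_max_right _ _, max_le (min_le_right _ _) (by linarith)⟩
  have hJ'ae : ∀ᵐ v : V3, J' v = J v := by
    filter_upwards [hJm.ae_eq_mk] with v hv
    have h1 : mJ v = J v := by rw [hmJ, ← hv]
    show max (min (mJ v) CJ) (-CJ) = J v
    rw [h1, min_eq_left (abs_le.1 (hJb v)).2, max_eq_left (abs_le.1 (hJb v)).1]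
  have hV := hwf J' hJ'm ⟨CJ, hJ'b⟩
  have hVconv : ∀ (F : V3 → ℝ), Integrable F →
      (∫ v, F v * J' v) = ∫ p : V3 × V3, F p.1 * g p.2 * ψ p := by
    intro F hF
    rw [fubini_step hF hgi hψm hb]
    refine integral_congr_ae ?_
    filter_upwards [hJ'ae] with v hv
    rw [hv]
  have hV' : Tendsto (fun n => ∫ p : V3 × V3, fs n p.1 * g p.2 * ψ p) atTop
      (nhds (∫ p : V3 × V3, f p.1 * g p.2 * ψ p)) := by
    rw [← hVconv f hfi]
    exact hV.congr fun n => hVconv (fs n) (hfsi n)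
  have hdecomp : ∀ n, (∫ p : V3 × V3, fs n p.1 * gs n p.2 * ψ p)
      = (∫ p : V3 × V3, fs n p.1 * (gs n p.2 - g p.2) * ψ p)
        + ∫ p : V3 × V3, fs n p.1 * g p.2 * ψ p := by
    intro n
    rw [← integral_add (integrable_tensor_test (hfsi n) (hgs' n) hψm hb)
      (integrable_tensor_test (hfsi n) hgi hψm hb)]
    congr 1; funext p; ring
  have hsum := hU.add hV'
  rw [zero_add] at hsum
  exact hsum.congr fun n => (hdecomp n).symm


end WCPL

/-- **Lemma 4.4.** Basic convergence properties:
(1) relative weak `L¹`-compactness and a.e. vanishing bounded factors give `L¹`-norm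
convergence of products; (2) tensor products with a weakly null sequence are weakly
null; (3) tensor products of weakly convergent sequences converge weakly. -/
theorem weak_compactness_product_lemma :
    (∀ f g : ℕ → V3 → ℝ, (∀ n, Integrable (f n)) → RelWeakCompactL1 f →
      (∀ n, Measurable (g n)) → (∃ M : ℝ, ∀ n, ∀ v, |g n v| ≤ M) →
      (∀ᵐ v : V3, Filter.Tendsto (fun n => g n v) Filter.atTop (nhds 0)) →
      Filter.Tendsto (fun n => ∫ v : V3, |f n v * g n v|) Filter.atTop (nhds 0))
    ∧ (∀ f g : ℕ → V3 → ℝ, (∀ n, Integrable (f n)) → RelWeakCompactL1 f →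
      (∀ n, Integrable (g n)) → WeakL1LimV g 0 →
      WeakL1LimP (fun n p => f n p.1 * g n p.2) 0
        ∧ WeakL1LimP (fun n p => g n p.1 * f n p.2) 0)
    ∧ (∀ fs gs : ℕ → V3 → ℝ, ∀ f g : V3 → ℝ,
      (∀ n, Integrable (fs n)) → (∀ n, Integrable (gs n)) →
      Integrable f → Integrable g →
      WeakL1LimV fs f → WeakL1LimV gs g →
      WeakL1LimP (fun n p => fs n p.1 * gs n p.2) (fun p => f p.1 * g p.2)) :=
  ⟨WCPL.part1, WCPL.part2, WCPL.part3⟩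

end
end
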